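/- arXiv:1402.5553 — 7 statements merged into one kernel-verified Lean document; each statement's English description precedes it below -/
import Mathlib

section
/- For n, d, m ∈ ℕ⁺ and α_1,…,α_m ∈ ℕ^d with |α_i| ≤ n for all i, the product of elementary multi-symmetric functions satisfies e_{α_1}⋯e_{α_m} = Σ_{a} c(α_1,…,α_m,a) · x^a in 𝕂[x_{11},…,x_{nd}], where the sum is over matrices a : [n]×[d] → ℕ, x^a = ∏_{j=1}^{n}∏_{l=1}^{d} x_{jl}^{a_{jl}}, and c(α_1,…,α_m,a) is the number of cubical matrices A : [m]×[n]×[d] → {0,1} such that Σ_{i=1}^{m} A_{ijl} = a_{jl} for all j ∈ [n], l ∈ [d]; Σ_{l=1}^{d} A_{ijl} ≤ 1 for all i ∈ [m], j ∈ [n]; and Σ_{j=1}^{n} A_{ijl} = (α_i)_l for all i ∈ [m], l ∈ [d]. -/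
open MvPolynomial

noncomputable section

/-- Substitute `x_{i j}` for `y_j`: the polynomial `q(i)`. -/
def substAt (n d : ℕ) (𝕂 : Type) [CommSemiring 𝕂] (i : Fin n)
    (q : MvPolynomial (Fin d) 𝕂) : MvPolynomial (Fin n × Fin d) 𝕂 :=
  rename (fun j => (i, j)) q

/-- Multi-symmetric function `e_γ(P)` for a family indexed by a finite type. -/
def esym (n d : ℕ) (𝕂 : Type) [CommSemiring 𝕂] {I : Type} [Fintype I] [DecidableEq I]
    (P : I → MvPolynomial (Fin d) 𝕂) (γ : I → ℕ) : MvPolynomial (Fin n × Fin d) 𝕂 :=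
  ∑ c ∈ Finset.univ.filter (fun c : I → Finset (Fin n) =>
      (∀ s, (c s).card = γ s) ∧ ∀ s t, s ≠ t → Disjoint (c s) (c t)),
    ∏ s, ∏ i ∈ c s, substAt n d 𝕂 i (P s)

/-- `e_{α_1} ⋯ e_{α_m} = Σ_a c(α_1,…,α_m,a) x^a` for elementary
multi-symmetric functions, where `c(α_1,…,α_m,a)` counts cubical `{0,1}`-matrices
`A : [m]×[n]×[d] → {0,1}` with `Σ_i A_{ijl} = a_{jl}`, `Σ_l A_{ijl} ≤ 1`, and
`Σ_j A_{ijl} = (α_i)_l`. -/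
theorem prod_elementary_multisymmetric_eq_sum_cubical_matrices
    (n d m : ℕ) (hn : 0 < n) (hd : 0 < d) (hm : 0 < m)
    (𝕂 : Type) [Field 𝕂] [CharZero 𝕂]
    (α : Fin m → Fin d → ℕ) (hα : ∀ i, ∑ l, α i l ≤ n) :
    (∏ i : Fin m, esym n d 𝕂 (fun j => X j) (α i))
      = ∑ᶠ a : Fin n → Fin d → ℕ,
          ((Finset.univ.filter (fun A : Fin m → Fin n → Fin d → Bool =>
              (∀ j l, (∑ i, if A i j l then 1 else 0) = a j l) ∧
              (∀ i j, (∑ l, if A i j l then 1 else 0) ≤ 1) ∧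
              (∀ i l, (∑ j, if A i j l then 1 else 0) = α i l))).card : ℕ)
            • ∏ j : Fin n, ∏ l : Fin d, X (j, l) ^ a j l := by
  classical
  set mon : (Fin n → Fin d → ℕ) → MvPolynomial (Fin n × Fin d) 𝕂 :=
    fun a => ∏ j : Fin n, ∏ l : Fin d, X (j, l) ^ a j l with hmon
  set aOf : (Fin m → Fin n → Fin d → Bool) → (Fin n → Fin d → ℕ) :=
    fun A j l => ∑ i, if A i j l then 1 else 0 with haOf
  set bigS : Finset (Fin m → Fin n → Fin d → Bool) :=
    Finset.univ.filter (fun A =>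
      (∀ i j, (∑ l, if A i j l then 1 else 0) ≤ 1) ∧
      (∀ i l, (∑ j, if A i j l then 1 else 0) = α i l)) with hbigS
  -- RHS as sum over bigS
  have hfilter : ∀ a : Fin n → Fin d → ℕ,
      Finset.univ.filter (fun A : Fin m → Fin n → Fin d → Bool =>
        (∀ j l, (∑ i, if A i j l then 1 else 0) = a j l) ∧
        (∀ i j, (∑ l, if A i j l then 1 else 0) ≤ 1) ∧
        (∀ i l, (∑ j, if A i j l then 1 else 0) = α i l))
      = bigS.filter (fun A => aOf A = a) := by
    intro a
    ext A
    simp only [hbigS, haOf, Finset.mem_filter, Finset.mem_univ, true_and]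
    constructor
    · rintro ⟨h1, h2, h3⟩
      exact ⟨⟨h2, h3⟩, by funext j l; exact h1 j l⟩
    · rintro ⟨⟨h2, h3⟩, h1⟩
      exact ⟨fun j l => by rw [← h1], h2, h3⟩
  have hsupp : (Function.support fun a : Fin n → Fin d → ℕ =>
      ((Finset.univ.filter (fun A : Fin m → Fin n → Fin d → Bool =>
        (∀ j l, (∑ i, if A i j l then 1 else 0) = a j l) ∧
        (∀ i j, (∑ l, if A i j l then 1 else 0) ≤ 1) ∧
        (∀ i l, (∑ j, if A i j l then 1 else 0) = α i l))).card : ℕ) • mon a)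
      ⊆ ↑(bigS.image aOf) := by
    intro a ha
    simp only [Function.mem_support, Ne] at ha
    rw [hfilter a] at ha
    have : (bigS.filter (fun A => aOf A = a)).Nonempty := by
      by_contra h
      rw [Finset.not_nonempty_iff_eq_empty] at h
      simp [h] at ha
    obtain ⟨A, hA⟩ := this
    rw [Finset.mem_filter] at hA
    exact Finset.mem_coe.2 (Finset.mem_image.2 ⟨A, hA.1, hA.2⟩)
  rw [finsum_eq_finset_sum_of_support_subset _ hsupp]
  have hrhs : ∑ a ∈ bigS.image aOf,
      ((Finset.univ.filter (fun A : Fin m → Fin n → Fin d → Bool =>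
        (∀ j l, (∑ i, if A i j l then 1 else 0) = a j l) ∧
        (∀ i j, (∑ l, if A i j l then 1 else 0) ≤ 1) ∧
        (∀ i l, (∑ j, if A i j l then 1 else 0) = α i l))).card : ℕ) • mon a
      = ∑ A ∈ bigS, mon (aOf A) := by
    rw [← Finset.sum_fiberwise_of_maps_to (g := aOf) (t := bigS.image aOf)
      (fun A hA => Finset.mem_image_of_mem _ hA) (fun A => mon (aOf A))]
    refine Finset.sum_congr rfl fun a _ => ?_
    rw [hfilter a, ← Finset.sum_const]
    refine Finset.sum_congr rfl fun A hA => ?_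
    rw [(Finset.mem_filter.1 hA).2]
  rw [hrhs]
  -- LHS
  simp only [esym, substAt, rename_X]
  rw [Finset.prod_univ_sum]
  refine Finset.sum_nbij' (i := fun c => fun i j l => decide (j ∈ c i l))
    (j := fun A => fun i l => Finset.univ.filter (fun j => A i j l)) ?_ ?_ ?_ ?_ ?_
  · intro c hc
    rw [Fintype.mem_piFinset] at hc
    rw [hbigS, Finset.mem_filter]
    refine ⟨Finset.mem_univ _, fun i j => ?_, fun i l => ?_⟩
    · have hci := hc i
      simp only [Finset.mem_filter, Finset.mem_univ, true_and] at hci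
      obtain ⟨hcard, hdisj⟩ := hci
      have : (∑ l, if decide (j ∈ c i l) = true then 1 else 0)
          = (Finset.univ.filter (fun l => j ∈ c i l)).card := by
        rw [Finset.card_filter]; simp
      rw [this, Finset.card_le_one]
      intro l hl l' hl'
      simp only [Finset.mem_filter, Finset.mem_univ, true_and] at hl hl'
      by_contra hne
      exact (Finset.disjoint_left.1 (hdisj l l' hne) hl) hl'
    · have hci := hc i
      simp only [Finset.mem_filter, Finset.mem_univ, true_and] at hci
      obtain ⟨hcard, hdisj⟩ := hci
      have : (∑ j, if decide (j ∈ c i l) = true then 1 else 0)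
          = (Finset.univ.filter (fun j => j ∈ c i l)).card := by
        rw [Finset.card_filter]; simp
      rw [this, Finset.filter_mem_eq_inter, Finset.univ_inter]
      exact hcard l
  · intro A hA
    rw [hbigS, Finset.mem_filter] at hA
    obtain ⟨-, h2, h3⟩ := hA
    rw [Fintype.mem_piFinset]
    intro i
    simp only [Finset.mem_filter, Finset.mem_univ, true_and]
    refine ⟨fun l => ?_, fun l l' hne => ?_⟩
    · show (Finset.univ.filter (fun j => A i j l = true)).card = α i l
      rw [← h3 i l]
      exact Finset.card_filter _ _
    · rw [Finset.disjoint_left]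
      intro j hj hj'
      simp only [Finset.mem_filter, Finset.mem_univ, true_and] at hj hj'
      have hle := h2 i j
      have : (2 : ℕ) ≤ ∑ l, if A i j l then 1 else 0 := by
        have hsub : ({l, l'} : Finset (Fin d)) ⊆ Finset.univ := Finset.subset_univ _
        calc (2 : ℕ) = ∑ x ∈ ({l, l'} : Finset (Fin d)), if A i j x then 1 else 0 := by
              rw [Finset.sum_pair hne, hj, hj']; norm_num
          _ ≤ ∑ l, if A i j l then 1 else 0 := Finset.sum_le_sum_of_subset hsub
      omega
  · intro c hc; funext i l; ext j; simp
  · intro A hA; funext i j l; simp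
  · intro c hc
    -- term equality
    have h1 : ∀ i l, (∏ j ∈ c i l, (X (j, l) : MvPolynomial (Fin n × Fin d) 𝕂))
        = ∏ j : Fin n, X (j, l) ^ (if j ∈ c i l then 1 else 0) := by
      intro i l
      simp only [pow_ite, pow_one, pow_zero]
      rw [Finset.prod_ite_mem, Finset.univ_inter]
    calc (∏ i, ∏ l, ∏ j ∈ c i l, (X (j, l) : MvPolynomial (Fin n × Fin d) 𝕂))
        = ∏ i, ∏ l, ∏ j : Fin n, X (j, l) ^ (if j ∈ c i l then 1 else 0) := by
          refine Finset.prod_congr rfl fun i _ => Finset.prod_congr rfl fun l _ => h1 i l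
      _ = ∏ i, ∏ j : Fin n, ∏ l, (X (j, l) : MvPolynomial (Fin n × Fin d) 𝕂)
            ^ (if j ∈ c i l then 1 else 0) :=
          Finset.prod_congr rfl fun i _ => Finset.prod_comm
      _ = ∏ j : Fin n, ∏ i, ∏ l, (X (j, l) : MvPolynomial (Fin n × Fin d) 𝕂)
            ^ (if j ∈ c i l then 1 else 0) := Finset.prod_comm
      _ = ∏ j : Fin n, ∏ l, ∏ i, (X (j, l) : MvPolynomial (Fin n × Fin d) 𝕂)
            ^ (if j ∈ c i l then 1 else 0) :=
          Finset.prod_congr rfl fun j _ => Finset.prod_comm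
      _ = mon (aOf fun i j l => decide (j ∈ c i l)) := by
          rw [hmon]
          refine Finset.prod_congr rfl fun j _ => Finset.prod_congr rfl fun l _ => ?_
          rw [Finset.prod_pow_eq_pow_sum, haOf]
          simp
end
end

section
/- Let α ∈ ℕ^a with |α| ≤ n and p = (p_1,…,p_a) ∈ 𝕂[y_1,…,y_d]^a. Let P ∈ R be the polynomial P = p_1(1)⋯p_1(α_1) · p_2(α_1+1)⋯p_2(α_1+α_2) ⋯ p_a(α_1+⋯+α_{a-1}+1)⋯p_a(α_1+⋯+α_a), i.e. the product in which p_l is evaluated at the α_l consecutive indices following α_1+⋯+α_{l-1}. Then the symmetrization of P satisfies Σ_{σ ∈ S_n} σ·P = α_1!⋯α_a!·(n−|α|)! · e_α(p), where σ ∈ S_n acts on R by the 𝕂-algebra automorphism sending x_{ij} to x_{σ(i)j}. -/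
open MvPolynomial

noncomputable section

namespace SymAux

variable {a : ℕ}

def sIdx (α : Fin a → ℕ) (l : Fin a) : ℕ :=
  ∑ l' ∈ Finset.univ.filter (fun l' => l' < l), α l'

lemma sIdx_add_le (α : Fin a → ℕ) (l : Fin a) : sIdx α l + α l ≤ ∑ l', α l' := by
  have hins : l ∉ Finset.univ.filter (fun l' => l' < l) := by simp
  have h : (∑ l' ∈ insert l (Finset.univ.filter (fun l' => l' < l)), α l') ≤ ∑ l', α l' :=
    Finset.sum_le_sum_of_subset (by intro x _; simp)
  rw [Finset.sum_insert hins] at h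
  unfold sIdx
  omega

lemma sIdx_mono (α : Fin a → ℕ) {u v : Fin a} (huv : u < v) :
    sIdx α u + α u ≤ sIdx α v := by
  have h1 : insert u (Finset.univ.filter (fun l' => l' < u))
      ⊆ Finset.univ.filter (fun l' => l' < v) := by
    intro x hx
    simp only [Finset.mem_insert, Finset.mem_filter, Finset.mem_univ, true_and] at hx ⊢
    rcases hx with rfl | hx
    · exact huv
    · exact hx.trans huv
  have h2 := Finset.sum_le_sum_of_subset (f := α) h1
  rw [Finset.sum_insert (by simp)] at h2
  unfold sIdx
  omega

variable {n : ℕ}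

def blockB (α : Fin a → ℕ) (hα : ∑ l, α l ≤ n) (l : Fin a) : Finset (Fin n) :=
  (Finset.Ico (sIdx α l) (sIdx α l + α l)).attachFin
    (fun m hm => lt_of_lt_of_le (Finset.mem_Ico.mp hm).2 (le_trans (sIdx_add_le α l) hα))

lemma mem_blockB (α : Fin a → ℕ) (hα : ∑ l, α l ≤ n) (l : Fin a) (i : Fin n) :
    i ∈ blockB α hα l ↔ sIdx α l ≤ i.1 ∧ i.1 < sIdx α l + α l := by
  rw [blockB, Finset.mem_attachFin, Finset.mem_Ico]

lemma card_blockB (α : Fin a → ℕ) (hα : ∑ l, α l ≤ n) (l : Fin a) :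
    (blockB α hα l).card = α l := by
  rw [blockB, Finset.card_attachFin, Nat.card_Ico]
  omega

lemma disjoint_blockB (α : Fin a → ℕ) (hα : ∑ l, α l ≤ n) :
    ∀ l l', l ≠ l' → Disjoint (blockB α hα l) (blockB α hα l') := by
  intro l l' hne
  rw [Finset.disjoint_left]
  intro i hi hi'
  rw [mem_blockB] at hi hi'
  rcases hne.lt_or_gt with h | h
  · have := sIdx_mono α h; omega
  · have := sIdx_mono α h; omega


variable {n a : ℕ} {B c : Fin a → Finset (Fin n)}

lemma block_eq (hB : ∀ s t, s ≠ t → Disjoint (B s) (B t))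
    {i : Fin n} {l l' : Fin a} (h : i ∈ B l) (h' : i ∈ B l') : l = l' := by
  by_contra hne
  exact Finset.disjoint_left.mp (hB l l' hne) h h'

def combineFun (e : ∀ l, {x // x ∈ B l} ≃ {x // x ∈ c l})
    (g : {x : Fin n // ¬∃ l, x ∈ B l} ≃ {x : Fin n // ¬∃ l, x ∈ c l}) :
    Fin n → Fin n :=
  fun i => if h : ∃ l, i ∈ B l then (e h.choose ⟨i, h.choose_spec⟩ : Fin n)
    else (g ⟨i, h⟩ : Fin n)

lemma combineFun_mem (hB : ∀ s t, s ≠ t → Disjoint (B s) (B t))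
    (e : ∀ l, {x // x ∈ B l} ≃ {x // x ∈ c l})
    (g : {x : Fin n // ¬∃ l, x ∈ B l} ≃ {x : Fin n // ¬∃ l, x ∈ c l})
    {i : Fin n} {l : Fin a} (hi : i ∈ B l) :
    combineFun e g i = (e l ⟨i, hi⟩ : Fin n) := by
  have hex : ∃ l, i ∈ B l := ⟨l, hi⟩
  unfold combineFun
  rw [dif_pos hex]
  obtain rfl := block_eq hB hex.choose_spec hi
  rfl

lemma combineFun_notMem (e : ∀ l, {x // x ∈ B l} ≃ {x // x ∈ c l})
    (g : {x : Fin n // ¬∃ l, x ∈ B l} ≃ {x : Fin n // ¬∃ l, x ∈ c l})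
    {i : Fin n} (h : ¬∃ l, i ∈ B l) :
    combineFun e g i = (g ⟨i, h⟩ : Fin n) := by
  unfold combineFun
  rw [dif_neg h]

lemma combineFun_injective (hB : ∀ s t, s ≠ t → Disjoint (B s) (B t))
    (hc : ∀ s t, s ≠ t → Disjoint (c s) (c t))
    (e : ∀ l, {x // x ∈ B l} ≃ {x // x ∈ c l})
    (g : {x : Fin n // ¬∃ l, x ∈ B l} ≃ {x : Fin n // ¬∃ l, x ∈ c l}) :
    Function.Injective (combineFun e g) := by
  intro i j hij
  by_cases hi : ∃ l, i ∈ B l <;> by_cases hj : ∃ l, j ∈ B l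
  · obtain ⟨li, hli⟩ := hi
    obtain ⟨lj, hlj⟩ := hj
    rw [combineFun_mem hB e g hli, combineFun_mem hB e g hlj] at hij
    have h1 : ((e li ⟨i, hli⟩ : Fin n)) ∈ c li := (e li ⟨i, hli⟩).2
    have h2 : ((e lj ⟨j, hlj⟩ : Fin n)) ∈ c lj := (e lj ⟨j, hlj⟩).2
    rw [hij] at h1
    obtain rfl := block_eq hc h1 h2
    have : e li ⟨i, hli⟩ = e li ⟨j, hlj⟩ := Subtype.coe_injective hij
    have := (e li).injective this
    exact congrArg Subtype.val this
  · exfalso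
    obtain ⟨li, hli⟩ := hi
    rw [combineFun_mem hB e g hli, combineFun_notMem e g hj] at hij
    exact (g ⟨j, hj⟩).2 ⟨li, hij ▸ (e li ⟨i, hli⟩).2⟩
  · exfalso
    obtain ⟨lj, hlj⟩ := hj
    rw [combineFun_notMem e g hi, combineFun_mem hB e g hlj] at hij
    exact (g ⟨i, hi⟩).2 ⟨lj, hij ▸ (e lj ⟨j, hlj⟩).2⟩
  · rw [combineFun_notMem e g hi, combineFun_notMem e g hj] at hij
    have : g ⟨i, hi⟩ = g ⟨j, hj⟩ := Subtype.coe_injective hij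
    have := g.injective this
    exact congrArg Subtype.val this

def combinePerm (hB : ∀ s t, s ≠ t → Disjoint (B s) (B t))
    (hc : ∀ s t, s ≠ t → Disjoint (c s) (c t))
    (e : ∀ l, {x // x ∈ B l} ≃ {x // x ∈ c l})
    (g : {x : Fin n // ¬∃ l, x ∈ B l} ≃ {x : Fin n // ¬∃ l, x ∈ c l}) :
    Equiv.Perm (Fin n) :=
  Equiv.ofBijective _ (Finite.injective_iff_bijective.mp (combineFun_injective hB hc e g))

lemma combinePerm_apply (hB : ∀ s t, s ≠ t → Disjoint (B s) (B t))
    (hc : ∀ s t, s ≠ t → Disjoint (c s) (c t))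
    (e : ∀ l, {x // x ∈ B l} ≃ {x // x ∈ c l})
    (g : {x : Fin n // ¬∃ l, x ∈ B l} ≃ {x : Fin n // ¬∃ l, x ∈ c l}) (i : Fin n) :
    combinePerm hB hc e g i = combineFun e g i := rfl

lemma image_combinePerm (hB : ∀ s t, s ≠ t → Disjoint (B s) (B t))
    (hc : ∀ s t, s ≠ t → Disjoint (c s) (c t))
    (e : ∀ l, {x // x ∈ B l} ≃ {x // x ∈ c l})
    (g : {x : Fin n // ¬∃ l, x ∈ B l} ≃ {x : Fin n // ¬∃ l, x ∈ c l}) (l : Fin a) :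
    (B l).image (combinePerm hB hc e g) = c l := by
  have hcard : (B l).card = (c l).card := by
    rw [← Fintype.card_coe, ← Fintype.card_coe]
    exact Fintype.card_congr (e l)
  have hsub : (B l).image (combinePerm hB hc e g) ⊆ c l := by
    intro x hx
    obtain ⟨i, hi, rfl⟩ := Finset.mem_image.mp hx
    rw [combinePerm_apply, combineFun_mem hB e g hi]
    exact (e l ⟨i, hi⟩).2
  refine Finset.eq_of_subset_of_card_le hsub ?_
  rw [Finset.card_image_of_injective _ (combinePerm hB hc e g).injective]
  exact hcard.ge

lemma card_compl_subtype (hB : ∀ s t, s ≠ t → Disjoint (B s) (B t)) :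
    Fintype.card {x : Fin n // ¬∃ l, x ∈ B l} = n - ∑ l, (B l).card := by
  have h1 : Fintype.card {x : Fin n // ∃ l, x ∈ B l} = ∑ l, (B l).card := by
    rw [Fintype.card_subtype]
    have hset : Finset.univ.filter (fun x : Fin n => ∃ l, x ∈ B l)
        = Finset.univ.biUnion B := by
      ext x; simp
    rw [hset, Finset.card_biUnion (fun s _ t _ hst => hB s t hst)]
  rw [Fintype.card_subtype_compl, h1, Fintype.card_fin]

lemma card_fiber (hB : ∀ s t, s ≠ t → Disjoint (B s) (B t))
    (hc : ∀ s t, s ≠ t → Disjoint (c s) (c t))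
    (hcard : ∀ l, (B l).card = (c l).card) :
    Fintype.card {σ : Equiv.Perm (Fin n) // ∀ l, (B l).image σ = c l}
      = (∏ l, Nat.factorial ((B l).card)) * Nat.factorial (n - ∑ l, (B l).card) := by
  have hsums : ∑ l, (B l).card = ∑ l, (c l).card := Finset.sum_congr rfl fun l _ => hcard l
  have hcB := card_compl_subtype hB
  have hcC := card_compl_subtype hc
  let Ψ : ((∀ l, {x // x ∈ B l} ≃ {x // x ∈ c l}) ×
      ({x : Fin n // ¬∃ l, x ∈ B l} ≃ {x : Fin n // ¬∃ l, x ∈ c l})) →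
      {σ : Equiv.Perm (Fin n) // ∀ l, (B l).image σ = c l} :=
    fun eg => ⟨combinePerm hB hc eg.1 eg.2, image_combinePerm hB hc eg.1 eg.2⟩
  have hΨ : Function.Bijective Ψ := by
    constructor
    · rintro ⟨e, g⟩ ⟨e', g'⟩ h
      have hperm : combinePerm hB hc e g = combinePerm hB hc e' g' :=
        congrArg Subtype.val h
      have happ : ∀ i, combineFun e g i = combineFun e' g' i := by
        intro i
        have := DFunLike.congr_fun hperm i
        rwa [combinePerm_apply, combinePerm_apply] at this
      refine Prod.ext ?_ ?_
      · funext l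
        apply Equiv.ext
        rintro ⟨i, hi⟩
        apply Subtype.ext
        have h1 := combineFun_mem hB e g hi
        have h2 := combineFun_mem hB e' g' hi
        rw [← h1, ← h2]
        exact happ i
      · apply Equiv.ext
        rintro ⟨i, hi⟩
        apply Subtype.ext
        have h1 := combineFun_notMem e g hi
        have h2 := combineFun_notMem e' g' hi
        rw [← h1, ← h2]
        exact happ i
    · rintro ⟨σ, hσ⟩
      have hmem : ∀ (l : Fin a) (x : {x // x ∈ B l}), σ x ∈ c l := by
        intro l x
        rw [← hσ l]
        exact Finset.mem_image_of_mem _ x.2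
      have hco : ∀ (x : {x : Fin n // ¬∃ l, x ∈ B l}), ¬∃ l, σ x ∈ c l := by
        rintro ⟨x, hx⟩ ⟨l, hl⟩
        rw [← hσ l] at hl
        obtain ⟨y, hy, hyx⟩ := Finset.mem_image.mp hl
        exact hx ⟨l, by rwa [σ.injective hyx] at hy⟩
      have hbij1 : ∀ l : Fin a,
          Function.Bijective (fun x : {x // x ∈ B l} => (⟨σ x, hmem l x⟩ : {x // x ∈ c l})) := by
        intro l
        rw [Fintype.bijective_iff_injective_and_card]
        refine ⟨?_, ?_⟩
        · intro x y hxy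
          exact Subtype.ext (σ.injective (congrArg Subtype.val hxy))
        · rw [Fintype.card_coe, Fintype.card_coe, hcard l]
      have hbij2 : Function.Bijective
          (fun x : {x : Fin n // ¬∃ l, x ∈ B l} => (⟨σ x, hco x⟩ : {x : Fin n // ¬∃ l, x ∈ c l})) := by
        rw [Fintype.bijective_iff_injective_and_card]
        refine ⟨?_, ?_⟩
        · intro x y hxy
          exact Subtype.ext (σ.injective (congrArg Subtype.val hxy))
        · rw [hcB, hcC, hsums]
      refine ⟨⟨fun l => Equiv.ofBijective _ (hbij1 l), Equiv.ofBijective _ hbij2⟩, ?_⟩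
      apply Subtype.ext
      apply Equiv.ext
      intro i
      rw [combinePerm_apply]
      by_cases h : ∃ l, i ∈ B l
      · obtain ⟨l, hl⟩ := h
        rw [combineFun_mem hB _ _ hl]
        rfl
      · rw [combineFun_notMem _ _ h]
        rfl
  rw [← Fintype.card_of_bijective hΨ, Fintype.card_prod, Fintype.card_pi]
  congr 1
  · refine Finset.prod_congr rfl fun l _ => ?_
    have hecard : Fintype.card {x // x ∈ B l} = Fintype.card {x // x ∈ c l} := by
      rw [Fintype.card_coe, Fintype.card_coe, hcard l]
    rw [Fintype.card_equiv (Fintype.equivOfCardEq hecard), Fintype.card_coe]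
  · have hgcard : Fintype.card {x : Fin n // ¬∃ l, x ∈ B l}
        = Fintype.card {x : Fin n // ¬∃ l, x ∈ c l} := by
      rw [hcB, hcC, hsums]
    rw [Fintype.card_equiv (Fintype.equivOfCardEq hgcard), hcB]


end SymAux

/-- the symmetrization of the polynomial
`P = p_1(1)⋯p_1(α_1) ⋯ p_a(α_1+⋯+α_{a-1}+1)⋯p_a(α_1+⋯+α_a)` equals
`α_1!⋯α_a!(n−|α|)! ⋅ e_α(p)`. -/
theorem symmetrization_eq_factorial_smul_esym
    (n d a : ℕ) (hn : 0 < n) (hd : 0 < d) (ha : 0 < a)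
    (𝕂 : Type) [Field 𝕂] [CharZero 𝕂]
    (p : Fin a → MvPolynomial (Fin d) 𝕂)
    (α : Fin a → ℕ) (hα : ∑ l, α l ≤ n) :
    (∑ σ : Equiv.Perm (Fin n),
        rename (fun s : Fin n × Fin d => (σ s.1, s.2))
          (∏ l : Fin a, ∏ t ∈ (Finset.range (α l)).attach,
            substAt n d 𝕂
              ⟨(∑ l' ∈ Finset.univ.filter (fun l' => l' < l), α l') + t.1, by
                have ht : t.1 < α l := Finset.mem_range.mp t.2
                have h2 : (∑ l' ∈ Finset.univ.filter (fun l' => l' < l), α l') + α l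
                    ≤ ∑ l', α l' := by
                  have hins : l ∉ Finset.univ.filter (fun l' => l' < l) := by simp
                  have : (∑ l' ∈ insert l (Finset.univ.filter (fun l' => l' < l)), α l')
                      ≤ ∑ l', α l' :=
                    Finset.sum_le_sum_of_subset (by intro x _; simp)
                  rw [Finset.sum_insert hins] at this
                  omega
                omega⟩
              (p l)))
      = ((∏ l, Nat.factorial (α l)) * Nat.factorial (n - ∑ l, α l)) •
          esym n d 𝕂 p α := by
  set B : Fin a → Finset (Fin n) := SymAux.blockB α hα with hB
  set F : Equiv.Perm (Fin n) → (Fin a → Finset (Fin n)) := fun σ l => (B l).image σ with hF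
  set G : (Fin a → Finset (Fin n)) → MvPolynomial (Fin n × Fin d) 𝕂 :=
    fun c => ∏ l, ∏ i ∈ c l, substAt n d 𝕂 i (p l) with hG
  set S : Finset (Fin a → Finset (Fin n)) :=
    Finset.univ.filter (fun c : Fin a → Finset (Fin n) =>
      (∀ s, (c s).card = α s) ∧ ∀ s t, s ≠ t → Disjoint (c s) (c t)) with hS
  -- Step 1: rewrite each summand
  have hrename : ∀ σ : Equiv.Perm (Fin n),
      rename (fun s : Fin n × Fin d => (σ s.1, s.2))
          (∏ l : Fin a, ∏ t ∈ (Finset.range (α l)).attach,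
            substAt n d 𝕂
              ⟨(∑ l' ∈ Finset.univ.filter (fun l' => l' < l), α l') + t.1, by
                have ht : t.1 < α l := Finset.mem_range.mp t.2
                have h2 : (∑ l' ∈ Finset.univ.filter (fun l' => l' < l), α l') + α l
                    ≤ ∑ l', α l' := by
                  have hins : l ∉ Finset.univ.filter (fun l' => l' < l) := by simp
                  have : (∑ l' ∈ insert l (Finset.univ.filter (fun l' => l' < l)), α l')
                      ≤ ∑ l', α l' :=
                    Finset.sum_le_sum_of_subset (by intro x _; simp)
                  rw [Finset.sum_insert hins] at this
                  omega
                omega⟩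
              (p l)) = G (F σ) := by
    intro σ
    rw [map_prod]
    refine Finset.prod_congr rfl fun l _ => ?_
    rw [map_prod]
    have hsub : ∀ (i : Fin n) (q : MvPolynomial (Fin d) 𝕂),
        rename (fun s : Fin n × Fin d => (σ s.1, s.2)) (substAt n d 𝕂 i q)
          = substAt n d 𝕂 (σ i) q := by
      intro i q
      unfold substAt
      rw [rename_rename]
      rfl
    have himg : ∏ i ∈ F σ l, substAt n d 𝕂 i (p l)
        = ∏ i ∈ B l, substAt n d 𝕂 (σ i) (p l) := by
      simp only [hF]
      rw [Finset.prod_image (fun x _ y _ h => σ.injective h)]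
    rw [himg]
    refine Finset.prod_bij
      (fun t ht => (⟨(∑ l' ∈ Finset.univ.filter (fun l' => l' < l), α l') + t.1, by
        have ht' : t.1 < α l := Finset.mem_range.mp t.2
        have := SymAux.sIdx_add_le α l
        unfold SymAux.sIdx at this
        omega⟩ : Fin n)) ?_ ?_ ?_ ?_
    · intro t _
      rw [SymAux.mem_blockB]
      have ht' : t.1 < α l := Finset.mem_range.mp t.2
      unfold SymAux.sIdx
      simp
      omega
    · intro t _ t' _ h
      have := Fin.mk.injEq .. ▸ h
      apply Subtype.ext
      have h' : (∑ l' ∈ Finset.univ.filter (fun l' => l' < l), α l') + t.1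
          = (∑ l' ∈ Finset.univ.filter (fun l' => l' < l), α l') + t'.1 :=
        congrArg Fin.val h
      omega
    · intro i hi
      rw [SymAux.mem_blockB] at hi
      unfold SymAux.sIdx at hi
      refine ⟨⟨i.1 - (∑ l' ∈ Finset.univ.filter (fun l' => l' < l), α l'), ?_⟩, ?_, ?_⟩
      · rw [Finset.mem_range]; omega
      · exact Finset.mem_attach _ _
      · apply Fin.ext
        simp
        omega
    · intro t _
      rw [hsub]
  rw [Finset.sum_congr rfl fun σ _ => hrename σ]
  -- Step 2: group by fibers
  have hmaps : ∀ σ ∈ (Finset.univ : Finset (Equiv.Perm (Fin n))), F σ ∈ S := by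
    intro σ _
    simp only [hS, Finset.mem_filter, Finset.mem_univ, true_and]
    constructor
    · intro l
      simp only [hF]
      rw [Finset.card_image_of_injective _ σ.injective]
      exact SymAux.card_blockB α hα l
    · intro l l' h
      simp only [hF]
      exact (Finset.disjoint_image σ.injective).mpr (SymAux.disjoint_blockB α hα l l' h)
  rw [← Finset.sum_fiberwise_of_maps_to hmaps (fun σ => G (F σ))]
  -- Step 3: each fiber sum
  have hfiber : ∀ c ∈ S,
      (∑ σ ∈ Finset.univ.filter (fun σ : Equiv.Perm (Fin n) => F σ = c), G (F σ))
        = ((∏ l, Nat.factorial (α l)) * Nat.factorial (n - ∑ l, α l)) • G c := by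
    intro c hc
    simp only [hS, Finset.mem_filter, Finset.mem_univ, true_and] at hc
    obtain ⟨hc1, hc2⟩ := hc
    rw [Finset.sum_congr rfl (fun σ hσ => by rw [(Finset.mem_filter.mp hσ).2]),
      Finset.sum_const]
    congr 1
    have hcnt : (Finset.univ.filter (fun σ : Equiv.Perm (Fin n) => F σ = c)).card
        = Fintype.card {σ : Equiv.Perm (Fin n) // ∀ l, (B l).image σ = c l} := by
      rw [Fintype.card_subtype]
      congr 1
      ext σ
      simp only [Finset.mem_filter, Finset.mem_univ, true_and, hF, funext_iff]
    rw [hcnt, SymAux.card_fiber (SymAux.disjoint_blockB α hα) hc2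
      (fun l => by rw [SymAux.card_blockB α hα l, hc1 l])]
    congr 1
    · exact Finset.prod_congr rfl fun l _ => by rw [SymAux.card_blockB α hα l]
    · congr 1
      congr 1
      exact Finset.sum_congr rfl fun l _ => SymAux.card_blockB α hα l
  rw [Finset.sum_congr rfl hfiber, ← Finset.smul_sum]
  rw [esym]
  simp only [hS, hG]
  congr 1
  exact Finset.sum_congr (by congr) (fun x _ => rfl)
end
end

section
/- Let p = (p_1,…,p_a) ∈ 𝕂[y_1,…,y_d]^a be expanded into monomials as p_l = Σ_{j∈[k_l]} c_{lj} m_{lj}, where each m_{lj} is a monomial in y_1,…,y_d and c_{lj} ∈ 𝕂. Set m = (m_{11},…,m_{1k_1},…,m_{a1},…,m_{ak_a}) and c = (c_{11},…,c_{ak_a}), and for β = (β_{11},…,β_{ak_a}) ∈ ℕ^{k_1+⋯+k_a} set r(β) = (β_{11}+⋯+β_{1k_1},…,β_{a1}+⋯+β_{ak_a}) ∈ ℕ^a and c^β = ∏_{l,j} c_{lj}^{β_{lj}}. Then for every α ∈ ℕ^a with |α| ≤ n: e_α(p) = Σ_{β : r(β)=α} e_β(m) · c^β. -/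
open MvPolynomial

noncomputable section

open Classical in
/-- From a disjoint tuple of finsets, the function sending each point to the (unique) index
of the set containing it. -/
noncomputable def tupleToFun {n : ℕ} {I : Type} (c : I → Finset (Fin n)) (i : Fin n) : Option I :=
  if h : ∃ s, i ∈ c s then some h.choose else none

lemma tupleToFun_eq_some {n : ℕ} {I : Type} {c : I → Finset (Fin n)}
    (hdis : ∀ s t, s ≠ t → Disjoint (c s) (c t)) {i : Fin n} {s : I} :
    tupleToFun c i = some s ↔ i ∈ c s := by
  classical
  constructor
  · intro h
    unfold tupleToFun at h
    split_ifs at h with hex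
    · obtain rfl : hex.choose = s := Option.some_inj.mp h
      exact hex.choose_spec
  · intro h
    have hex : ∃ s, i ∈ c s := ⟨s, h⟩
    have : hex.choose = s := by
      by_contra hne
      exact (Finset.disjoint_left.mp (hdis _ _ hne) hex.choose_spec) h
    simp [tupleToFun, dif_pos hex, this]

lemma prod_option_fiber {M : Type} [CommMonoid M] {n : ℕ} {I : Type} [Fintype I] [DecidableEq I]
    (f : Fin n → Option I) (F : I → Fin n → M) :
    (∏ s : I, ∏ i ∈ Finset.univ.filter (fun i => f i = some s), F s i)
      = ∏ i : Fin n, (f i).elim 1 (fun s => F s i) := by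
  classical
  have h := Finset.prod_fiberwise_of_maps_to (s := (Finset.univ : Finset (Fin n)))
    (t := (Finset.univ : Finset (Option I))) (g := f)
    (fun i _ => Finset.mem_univ _) (fun i => (f i).elim 1 (fun s => F s i))
  rw [← h, Fintype.prod_option]
  have hnone : (∏ i ∈ Finset.univ.filter (fun i => f i = none),
      (f i).elim 1 (fun s => F s i)) = 1 := by
    apply Finset.prod_eq_one
    intro i hi
    rw [Finset.mem_filter] at hi
    rw [hi.2]; rfl
  rw [hnone, one_mul]
  apply Finset.prod_congr rfl
  intro s _
  apply Finset.prod_congr rfl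
  intro i hi
  rw [Finset.mem_filter] at hi
  rw [hi.2]; rfl

/-- `esym` as a sum over functions `Fin n → Option I` with prescribed fiber cardinalities. -/
lemma esym_eq_sum_fun (n d : ℕ) (𝕂 : Type) [CommSemiring 𝕂] {I : Type} [Fintype I]
    [DecidableEq I] (P : I → MvPolynomial (Fin d) 𝕂) (γ : I → ℕ) :
    esym n d 𝕂 P γ
      = ∑ f ∈ Finset.univ.filter (fun f : Fin n → Option I =>
          ∀ s, (Finset.univ.filter (fun i => f i = some s)).card = γ s),
        ∏ i : Fin n, (f i).elim 1 (fun s => substAt n d 𝕂 i (P s)) := by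
  classical
  unfold esym
  refine Finset.sum_bij' (fun c _ => tupleToFun c)
    (fun f _ => fun s => Finset.univ.filter (fun i => f i = some s)) ?_ ?_ ?_ ?_ ?_
  · intro c hc
    rw [Finset.mem_filter] at hc ⊢
    refine ⟨Finset.mem_univ _, fun s => ?_⟩
    have : Finset.univ.filter (fun i => tupleToFun c i = some s) = c s := by
      ext i; simp [tupleToFun_eq_some hc.2.2]
    rw [this]; exact hc.2.1 s
  · intro f hf
    rw [Finset.mem_filter] at hf ⊢
    refine ⟨Finset.mem_univ _, fun s => hf.2 s, fun s t hst => ?_⟩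
    rw [Finset.disjoint_left]
    intro i hi hi'
    rw [Finset.mem_filter] at hi hi'
    rw [hi.2] at hi'
    exact hst (Option.some_inj.mp hi'.2.symm).symm
  · intro c hc
    rw [Finset.mem_filter] at hc
    funext s
    ext i
    simp [tupleToFun_eq_some hc.2.2]
  · intro f hf
    show tupleToFun _ = f
    funext i
    rcases hfi : f i with _ | s
    · rw [tupleToFun, dif_neg]
      push_neg
      intro s hs
      rw [Finset.mem_filter] at hs
      rw [hfi] at hs
      exact absurd hs.2 (by simp)
    · rw [tupleToFun_eq_some]
      · simp [hfi]
      · intro s t hst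
        rw [Finset.disjoint_left]
        intro j hj hj'
        rw [Finset.mem_filter] at hj hj'
        rw [hj.2] at hj'
        exact hst (Option.some_inj.mp hj'.2.symm).symm
  · intro c hc
    rw [Finset.mem_filter] at hc
    rw [← prod_option_fiber (tupleToFun c) (fun s i => substAt n d 𝕂 i (P s))]
    apply Finset.prod_congr rfl
    intro s _
    apply Finset.prod_congr _ (fun _ _ => rfl)
    ext i
    simp [tupleToFun_eq_some hc.2.2]
lemma count_fibers {n a : ℕ} {k : Fin a → ℕ} (h : Fin n → Option (Σ l : Fin a, Fin (k l)))
    (l : Fin a) :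
    (Finset.univ.filter (fun i => Option.map Sigma.fst (h i) = some l)).card
      = ∑ j : Fin (k l), (Finset.univ.filter (fun i => h i = some ⟨l, j⟩)).card := by
  classical
  rw [Finset.card_eq_sum_card_fiberwise (f := h)
    (t := Finset.image (fun j : Fin (k l) => (some ⟨l, j⟩ : Option (Σ l, Fin (k l)))) Finset.univ)
    (by
      intro i hi
      rw [Finset.mem_coe, Finset.mem_filter] at hi
      rcases hhi : h i with _ | s
      · rw [hhi] at hi; exact absurd hi.2 (by simp)
      · rw [hhi] at hi
        have hs : s.1 = l := by simpa using hi.2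
        subst hs
        simp)]
  rw [Finset.sum_image (by intro x _ y _ hxy; simpa using hxy)]
  apply Finset.sum_congr rfl
  intro j _
  congr 1
  ext i
  simp only [Finset.mem_filter, Finset.mem_univ, true_and]
  constructor
  · rintro ⟨_, h2⟩; exact h2
  · intro h2; exact ⟨by rw [h2]; rfl, h2⟩

lemma mem_piW {n a : ℕ} {k : Fin a → ℕ} (f : Fin n → Option (Fin a))
    (h : Fin n → Option (Σ l : Fin a, Fin (k l))) :
    h ∈ Fintype.piFinset (fun i => (f i).elim {none}
        (fun l => Finset.image (fun j : Fin (k l) => (some ⟨l, j⟩ : Option (Σ l, Fin (k l))))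
          Finset.univ))
      ↔ Option.map Sigma.fst ∘ h = f := by
  classical
  rw [Fintype.mem_piFinset, funext_iff]
  apply forall_congr'
  intro i
  rcases hfi : f i with _ | l
  · rcases hhi : h i with _ | s <;> simp [hhi]
  · rcases hhi : h i with _ | s
    · simp [hhi]
    · simp only [hhi, Option.elim, Finset.mem_image, Finset.mem_univ, true_and,
        Function.comp_apply, Option.map_some]
      constructor
      · rintro ⟨j, hj⟩
        obtain rfl : (⟨l, j⟩ : Σ l, Fin (k l)) = s := Option.some_inj.mp hj
        rfl
      · intro hs
        have hs1 : s.1 = l := Option.some_inj.mp hs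
        subst hs1
        exact ⟨s.2, rfl⟩

lemma expand_prod {n d a : ℕ} {𝕂 : Type} [CommSemiring 𝕂] {k : Fin a → ℕ}
    (p : Fin a → MvPolynomial (Fin d) 𝕂)
    (m : (Σ l : Fin a, Fin (k l)) → MvPolynomial (Fin d) 𝕂)
    (coef : (Σ l : Fin a, Fin (k l)) → 𝕂)
    (hp : ∀ l : Fin a, p l = ∑ j : Fin (k l), MvPolynomial.C (coef ⟨l, j⟩) * m ⟨l, j⟩)
    (f : Fin n → Option (Fin a)) :
    (∏ i : Fin n, (f i).elim 1 (fun l => substAt n d 𝕂 i (p l)))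
      = ∑ h ∈ Fintype.piFinset (fun i => (f i).elim {none}
          (fun l => Finset.image (fun j : Fin (k l) => (some ⟨l, j⟩ : Option (Σ l, Fin (k l))))
            Finset.univ)),
        ∏ i : Fin n, (h i).elim 1
          (fun s => MvPolynomial.C (coef s) * substAt n d 𝕂 i (m s)) := by
  classical
  rw [← Finset.prod_univ_sum _
    (fun i (w : Option (Σ l, Fin (k l))) => w.elim 1
      (fun s => MvPolynomial.C (coef s) * substAt n d 𝕂 i (m s)))]
  apply Finset.prod_congr rfl
  intro i _
  rcases hfi : f i with _ | l
  · simp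
  · simp only [Option.elim]
    rw [Finset.sum_image (by intro x _ y _ hxy; simpa using hxy)]
    simp only [Option.elim]
    rw [hp l]
    unfold substAt
    rw [map_sum]
    apply Finset.sum_congr rfl
    intro j _
    rw [map_mul, MvPolynomial.rename_C]

lemma esym_p_eq {n d a : ℕ} {𝕂 : Type} [CommSemiring 𝕂] {k : Fin a → ℕ}
    (p : Fin a → MvPolynomial (Fin d) 𝕂)
    (m : (Σ l : Fin a, Fin (k l)) → MvPolynomial (Fin d) 𝕂)
    (coef : (Σ l : Fin a, Fin (k l)) → 𝕂)
    (hp : ∀ l : Fin a, p l = ∑ j : Fin (k l), MvPolynomial.C (coef ⟨l, j⟩) * m ⟨l, j⟩)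
    (α : Fin a → ℕ) :
    esym n d 𝕂 p α
      = ∑ h ∈ Finset.univ.filter (fun h : Fin n → Option (Σ l : Fin a, Fin (k l)) =>
          ∀ l, ∑ j : Fin (k l), (Finset.univ.filter (fun i => h i = some ⟨l, j⟩)).card = α l),
        ∏ i : Fin n, (h i).elim 1
          (fun s => MvPolynomial.C (coef s) * substAt n d 𝕂 i (m s)) := by
  classical
  rw [esym_eq_sum_fun]
  rw [Finset.sum_congr rfl (fun f _ => expand_prod p m coef hp f)]
  rw [Finset.sum_sigma']
  refine Finset.sum_bij' (fun x _ => x.2)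
    (fun h _ => ⟨fun i => Option.map Sigma.fst (h i), h⟩) ?_ ?_ ?_ ?_ ?_
  · rintro ⟨f, h⟩ hx
    simp only [Finset.mem_sigma, Finset.mem_filter, Finset.mem_univ, true_and] at hx
    obtain ⟨hf, hh⟩ := hx
    rw [mem_piW] at hh
    simp only [Finset.mem_filter, Finset.mem_univ, true_and]
    intro l
    rw [← count_fibers]
    have hfn : Finset.univ.filter (fun i => Option.map Sigma.fst (h i) = some l)
        = Finset.univ.filter (fun i => f i = some l) := by
      apply Finset.filter_congr
      intro i _
      exact iff_of_eq (congrArg (· = some l) (congrFun hh i))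
    rw [hfn]
    exact hf l
  · intro h hh
    simp only [Finset.mem_filter, Finset.mem_univ, true_and] at hh
    simp only [Finset.mem_sigma, Finset.mem_filter, Finset.mem_univ, true_and]
    constructor
    · intro l
      rw [count_fibers]
      exact hh l
    · rw [mem_piW]
      rfl
  · rintro ⟨f, h⟩ hx
    simp only [Finset.mem_sigma] at hx
    obtain ⟨hf, hh⟩ := hx
    rw [mem_piW] at hh
    have hfe : (fun i => Option.map Sigma.fst (h i)) = f := by
      funext i
      exact congrFun hh i
    simp only [Sigma.mk.inj_iff, hfe, heq_eq_eq, and_self]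
  · intro h _
    rfl
  · intro x _
    rfl

lemma sum_beta_eq (n d a : ℕ) (𝕂 : Type) [Field 𝕂] {k : Fin a → ℕ}
    (m : (Σ l : Fin a, Fin (k l)) → MvPolynomial (Fin d) 𝕂)
    (coef : (Σ l : Fin a, Fin (k l)) → 𝕂)
    (α : Fin a → ℕ) (hα : ∑ l, α l ≤ n) :
    (∑ᶠ (β : (Σ l : Fin a, Fin (k l)) → ℕ)
        (_ : ∀ l : Fin a, ∑ j : Fin (k l), β ⟨l, j⟩ = α l),
        esym n d 𝕂 m β * MvPolynomial.C (∏ s, coef s ^ β s))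
      = ∑ h ∈ Finset.univ.filter (fun h : Fin n → Option (Σ l : Fin a, Fin (k l)) =>
          ∀ l, ∑ j : Fin (k l), (Finset.univ.filter (fun i => h i = some ⟨l, j⟩)).card = α l),
        ∏ i : Fin n, (h i).elim 1
          (fun s => MvPolynomial.C (coef s) * substAt n d 𝕂 i (m s)) := by
  classical
  have hQle : ∀ β : (Σ l : Fin a, Fin (k l)) → ℕ,
      (∀ l : Fin a, ∑ j : Fin (k l), β ⟨l, j⟩ = α l) → ∀ s, β s ≤ n := by
    intro β hQβ s
    have h1 : β s ≤ ∑ j : Fin (k s.1), β ⟨s.1, j⟩ := by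
      have := Finset.single_le_sum (f := fun j : Fin (k s.1) => β ⟨s.1, j⟩)
        (fun _ _ => Nat.zero_le _) (Finset.mem_univ s.2)
      simpa using this
    have h2 : α s.1 ≤ ∑ l, α l :=
      Finset.single_le_sum (fun _ _ => Nat.zero_le _) (Finset.mem_univ s.1)
    calc β s ≤ α s.1 := by rw [← hQβ s.1]; exact h1
      _ ≤ n := le_trans h2 hα
  have e1 : ∀ β : (Σ l : Fin a, Fin (k l)) → ℕ,
      (∑ᶠ (_ : ∀ l : Fin a, ∑ j : Fin (k l), β ⟨l, j⟩ = α l),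
          esym n d 𝕂 m β * MvPolynomial.C (∏ s, coef s ^ β s))
        = if (∀ l : Fin a, ∑ j : Fin (k l), β ⟨l, j⟩ = α l) then
            esym n d 𝕂 m β * MvPolynomial.C (∏ s, coef s ^ β s) else 0 :=
    fun β => finsum_eq_if
  rw [finsum_congr e1]
  rw [finsum_eq_finset_sum_of_support_subset _
    (s := (Fintype.piFinset (fun _ : (Σ l : Fin a, Fin (k l)) => Finset.range (n + 1))).filter
      (fun β => ∀ l : Fin a, ∑ j : Fin (k l), β ⟨l, j⟩ = α l))
    (by
      intro β hβ
      rw [Function.mem_support] at hβ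
      have hQβ : ∀ l : Fin a, ∑ j : Fin (k l), β ⟨l, j⟩ = α l := by
        by_contra hc
        rw [if_neg hc] at hβ
        exact hβ rfl
      simp only [Finset.coe_filter, Set.mem_setOf_eq, Fintype.mem_piFinset, Finset.mem_range]
      exact ⟨fun s => Nat.lt_succ_of_le (hQle β hQβ s), hQβ⟩)]
  rw [Finset.sum_congr rfl (fun β hβ => by
    rw [if_pos (Finset.mem_filter.mp hβ).2])]
  have key : ∀ h : Fin n → Option (Σ l : Fin a, Fin (k l)),
      (∏ i : Fin n, (h i).elim 1
          (fun s => MvPolynomial.C (coef s) * substAt n d 𝕂 i (m s)))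
        = (∏ i : Fin n, (h i).elim 1 (fun s => substAt n d 𝕂 i (m s)))
            * MvPolynomial.C (∏ s,
                coef s ^ (Finset.univ.filter (fun i => h i = some s)).card) := by
    intro h
    rw [← prod_option_fiber h (fun s i => MvPolynomial.C (coef s) * substAt n d 𝕂 i (m s)),
        ← prod_option_fiber h (fun s i => substAt n d 𝕂 i (m s))]
    rw [map_prod]
    simp only [map_pow]
    rw [← Finset.prod_mul_distrib]
    apply Finset.prod_congr rfl
    intro s _
    rw [Finset.prod_mul_distrib, Finset.prod_const]
    ring
  rw [Finset.sum_congr rfl (fun β _ => by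
    rw [esym_eq_sum_fun n d 𝕂 m β, Finset.sum_mul])]
  rw [Finset.sum_sigma']
  refine Finset.sum_bij' (fun x _ => x.2)
    (fun h _ => ⟨fun s => (Finset.univ.filter (fun i => h i = some s)).card, h⟩)
    ?_ ?_ ?_ ?_ ?_
  · rintro ⟨β, h⟩ hx
    simp only [Finset.mem_sigma, Finset.mem_filter, Finset.mem_univ, true_and,
      Fintype.mem_piFinset, Finset.mem_range] at hx
    obtain ⟨⟨hβ1, hβ2⟩, hh⟩ := hx
    simp only [Finset.mem_filter, Finset.mem_univ, true_and]
    intro l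
    rw [← hβ2 l]
    exact Finset.sum_congr rfl fun j _ => hh ⟨l, j⟩
  · intro h hh
    simp only [Finset.mem_filter, Finset.mem_univ, true_and] at hh
    simp only [Finset.mem_sigma, Finset.mem_filter, Finset.mem_univ, true_and,
      Fintype.mem_piFinset, Finset.mem_range]
    refine ⟨⟨fun s => ?_, fun l => hh l⟩, fun _ => trivial⟩
    exact Nat.lt_succ_of_le (le_trans (Finset.card_filter_le _ _) (by simp))
  · rintro ⟨β, h⟩ hx
    simp only [Finset.mem_sigma, Finset.mem_filter, Finset.mem_univ, true_and] at hx
    obtain ⟨hβ, hh⟩ := hx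
    have hfe : (fun s => (Finset.univ.filter (fun i => h i = some s)).card) = β := by
      funext s
      exact hh s
    simp only [Sigma.mk.inj_iff, hfe, heq_eq_eq, and_self]
  · intro h _
    rfl
  · rintro ⟨β, h⟩ hx
    simp only [Finset.mem_sigma, Finset.mem_filter, Finset.mem_univ, true_and] at hx
    obtain ⟨hβ, hh⟩ := hx
    dsimp only
    rw [key h]
    congr 1
    exact congrArg _ (Finset.prod_congr rfl fun s _ => by rw [hh s])

/-- if `p_l = Σ_{j ∈ [k_l]} c_{lj} m_{lj}` is an expansion into monomials,
then `e_α(p) = Σ_{β : r(β) = α} e_β(m) c^β`. -/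
theorem esym_expand_monomials
    (n d a : ℕ) (hn : 0 < n) (hd : 0 < d) (ha : 0 < a)
    (𝕂 : Type) [Field 𝕂] [CharZero 𝕂]
    (k : Fin a → ℕ)
    (p : Fin a → MvPolynomial (Fin d) 𝕂)
    (m : (Σ l : Fin a, Fin (k l)) → MvPolynomial (Fin d) 𝕂)
    (coef : (Σ l : Fin a, Fin (k l)) → 𝕂)
    (hmon : ∀ s, ∃ e : Fin d →₀ ℕ, m s = monomial e 1)
    (hp : ∀ l : Fin a, p l = ∑ j : Fin (k l), C (coef ⟨l, j⟩) * m ⟨l, j⟩)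
    (α : Fin a → ℕ) (hα : ∑ l, α l ≤ n) :
    esym n d 𝕂 p α
      = ∑ᶠ (β : (Σ l : Fin a, Fin (k l)) → ℕ)
          (_ : ∀ l : Fin a, ∑ j : Fin (k l), β ⟨l, j⟩ = α l),
          esym n d 𝕂 m β * C (∏ s, coef s ^ β s) := by
  rw [esym_p_eq p m coef hp α]
  exact (sum_beta_eq n d a 𝕂 m coef α hα).symm
end
end

section
/- (Vaccarino's product formula) Fix a, b, n ∈ ℕ⁺, p ∈ 𝕂[y_1,…,y_d]^a and q ∈ 𝕂[y_1,…,y_d]^b, and let α ∈ ℕ^a, β ∈ ℕ^b with |α| ≤ n and |β| ≤ n. Then e_α(p) · e_β(q) = Σ_{γ ∈ L(α,β,n)} e_γ(p,q,pq), where L(α,β,n) is the set of matrices γ : [0,a]×[0,b] → ℕ with γ_{00} = 0, Σ_{l=0}^{a} Σ_{r=0}^{b} γ_{lr} ≤ n, Σ_{r=0}^{b} γ_{lr} = α_l for l ∈ [a], and Σ_{l=0}^{a} γ_{lr} = β_r for r ∈ [b]; and e_γ(p,q,pq) denotes the multi-symmetric function e applied with multiplicity vector γ to the family of polynomials whose entry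 at index (l,0) is p_l, at index (0,r) is q_r, and at index (l,r) (l ∈ [a], r ∈ [b]) is p_l·q_r. -/
open MvPolynomial Finset

noncomputable section

/-- The family `(p, q, pq)` indexed by `[0,a] × [0,b]`: entry `p_l` at `(l,0)`,
`q_r` at `(0,r)`, and `p_l q_r` at `(l,r)` for `l ∈ [a]`, `r ∈ [b]`
(the entry at `(0,0)` is irrelevant since `γ_{00} = 0`). -/
def pqFamily {d a b : ℕ} (𝕂 : Type) [CommSemiring 𝕂]
    (p : Fin a → MvPolynomial (Fin d) 𝕂) (q : Fin b → MvPolynomial (Fin d) 𝕂) :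
    Fin (a + 1) × Fin (b + 1) → MvPolynomial (Fin d) 𝕂 :=
  fun s =>
    if hl : s.1 = 0 then
      (if hr : s.2 = 0 then 1 else q (s.2.pred hr))
    else
      (if hr : s.2 = 0 then p (s.1.pred hl) else p (s.1.pred hl) * q (s.2.pred hr))

section Aux

variable {n a b : ℕ}

def toFam (c : Fin a → Finset (Fin n)) (e : Fin b → Finset (Fin n)) :
    Fin (a + 1) × Fin (b + 1) → Finset (Fin n) := fun s =>
  Fin.cases (Fin.cases ∅ (fun r => e r \ Finset.univ.biUnion c) s.2)
    (fun l => Fin.cases (c l \ Finset.univ.biUnion e) (fun r => c l ∩ e r) s.2) s.1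

variable {c : Fin a → Finset (Fin n)} {e : Fin b → Finset (Fin n)}

@[simp] lemma toFam_zero_zero : toFam c e (0, 0) = ∅ := by simp [toFam]

@[simp] lemma toFam_zero_succ (r : Fin b) :
    toFam c e (0, r.succ) = e r \ Finset.univ.biUnion c := by simp [toFam]

@[simp] lemma toFam_succ_zero (l : Fin a) :
    toFam c e (l.succ, 0) = c l \ Finset.univ.biUnion e := by simp [toFam]

@[simp] lemma toFam_succ_succ (l : Fin a) (r : Fin b) :
    toFam c e (l.succ, r.succ) = c l ∩ e r := by simp [toFam]

lemma toFam_subset_left (l : Fin a) (r : Fin (b + 1)) : toFam c e (l.succ, r) ⊆ c l := by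
  rcases Fin.eq_zero_or_eq_succ r with rfl | ⟨r', rfl⟩ <;>
    simp [Finset.sdiff_subset, Finset.inter_subset_left]

lemma toFam_subset_right (l : Fin (a + 1)) (r : Fin b) : toFam c e (l, r.succ) ⊆ e r := by
  rcases Fin.eq_zero_or_eq_succ l with rfl | ⟨l', rfl⟩ <;>
    simp [Finset.sdiff_subset, Finset.inter_subset_right]

lemma toFam_disjoint (hc : ∀ l l', l ≠ l' → Disjoint (c l) (c l'))
    (he : ∀ r r', r ≠ r' → Disjoint (e r) (e r')) :
    ∀ s t, s ≠ t → Disjoint (toFam c e s) (toFam c e t) := by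
  have hcU : ∀ (l : Fin a) (r : Fin (b + 1)),
      toFam c e (l.succ, r) ⊆ Finset.univ.biUnion c :=
    fun l r => (toFam_subset_left l r).trans (Finset.subset_biUnion_of_mem c (Finset.mem_univ l))
  have heU : ∀ (l : Fin (a + 1)) (r : Fin b),
      toFam c e (l, r.succ) ⊆ Finset.univ.biUnion e :=
    fun l r => (toFam_subset_right l r).trans (Finset.subset_biUnion_of_mem e (Finset.mem_univ r))
  rintro ⟨s1, s2⟩ ⟨t1, t2⟩ hst
  rcases Fin.eq_zero_or_eq_succ s1 with rfl | ⟨l, rfl⟩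
  · rcases Fin.eq_zero_or_eq_succ s2 with rfl | ⟨r, rfl⟩
    · simp [toFam]
    · rcases Fin.eq_zero_or_eq_succ t1 with rfl | ⟨l', rfl⟩
      · rcases Fin.eq_zero_or_eq_succ t2 with rfl | ⟨r', rfl⟩
        · simp [toFam]
        · have hrr : r ≠ r' := by rintro rfl; exact hst rfl
          exact (he r r' hrr).mono (toFam_subset_right _ _) (toFam_subset_right _ _)
      · rw [toFam_zero_succ]
        exact Finset.sdiff_disjoint.mono_right (hcU l' t2)
  · rcases Fin.eq_zero_or_eq_succ t1 with rfl | ⟨l', rfl⟩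
    · rcases Fin.eq_zero_or_eq_succ t2 with rfl | ⟨r', rfl⟩
      · simp [toFam]
      · rw [toFam_zero_succ]
        exact (Finset.sdiff_disjoint.mono_right (hcU l s2)).symm
    · by_cases hll : l = l'
      · subst hll
        have hss : s2 ≠ t2 := by rintro rfl; exact hst rfl
        rcases Fin.eq_zero_or_eq_succ s2 with rfl | ⟨r, rfl⟩
        · rcases Fin.eq_zero_or_eq_succ t2 with rfl | ⟨r', rfl⟩
          · exact absurd rfl hss
          · rw [toFam_succ_zero]
            exact Finset.sdiff_disjoint.mono_right (heU _ r')
        · rcases Fin.eq_zero_or_eq_succ t2 with rfl | ⟨r', rfl⟩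
          · rw [toFam_succ_zero]
            exact (Finset.sdiff_disjoint.mono_right (heU _ r)).symm
          · have hrr : r ≠ r' := by rintro rfl; exact hss rfl
            exact (he r r' hrr).mono (toFam_subset_right _ _) (toFam_subset_right _ _)
      · exact (hc l l' hll).mono (toFam_subset_left _ _) (toFam_subset_left _ _)

lemma biUnion_row (l : Fin a) :
    Finset.univ.biUnion (fun r : Fin (b + 1) => toFam c e (l.succ, r)) = c l := by
  ext i
  simp only [Finset.mem_biUnion, Finset.mem_univ, true_and]
  constructor
  · rintro ⟨r, hr⟩; exact toFam_subset_left l r hr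
  · intro hi
    by_cases h : i ∈ Finset.univ.biUnion e
    · rcases Finset.mem_biUnion.1 h with ⟨r, -, hr⟩
      exact ⟨r.succ, by simp [hi, hr]⟩
    · exact ⟨0, by simp [hi, h]⟩

lemma biUnion_col (r : Fin b) :
    Finset.univ.biUnion (fun l : Fin (a + 1) => toFam c e (l, r.succ)) = e r := by
  ext i
  simp only [Finset.mem_biUnion, Finset.mem_univ, true_and]
  constructor
  · rintro ⟨l, hl⟩; exact toFam_subset_right l r hl
  · intro hi
    by_cases h : i ∈ Finset.univ.biUnion c
    · rcases Finset.mem_biUnion.1 h with ⟨l, -, hl⟩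
      exact ⟨l.succ, by simp [hi, hl]⟩
    · exact ⟨0, by simp [hi, h]⟩


lemma eq_of_mem_toFamilies {c' : Fin (a + 1) × Fin (b + 1) → Finset (Fin n)}
    (hd : ∀ s t, s ≠ t → Disjoint (c' s) (c' t)) {i : Fin n} {s t : Fin (a + 1) × Fin (b + 1)}
    (hi : i ∈ c' s) (hj : i ∈ c' t) : s = t := by
  by_contra h
  exact Finset.disjoint_left.1 (hd s t h) hi hj

lemma toFam_toPair (c' : Fin (a + 1) × Fin (b + 1) → Finset (Fin n))
    (hd : ∀ s t, s ≠ t → Disjoint (c' s) (c' t)) (h00 : c' (0, 0) = ∅) :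
    toFam (fun l => Finset.univ.biUnion fun r => c' (l.succ, r))
      (fun r => Finset.univ.biUnion fun l => c' (l, r.succ)) = c' := by
  funext s
  obtain ⟨s1, s2⟩ := s
  rcases Fin.eq_zero_or_eq_succ s1 with rfl | ⟨l, rfl⟩
  · rcases Fin.eq_zero_or_eq_succ s2 with rfl | ⟨r, rfl⟩
    · rw [toFam_zero_zero, h00]
    · rw [toFam_zero_succ]
      ext i
      simp only [Finset.mem_sdiff, Finset.mem_biUnion, Finset.mem_univ, true_and]
      constructor
      · rintro ⟨⟨l0, hl0⟩, hno⟩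
        rcases Fin.eq_zero_or_eq_succ l0 with rfl | ⟨l1, rfl⟩
        · exact hl0
        · exact absurd ⟨l1, r.succ, hl0⟩ hno
      · intro hi
        refine ⟨⟨0, hi⟩, ?_⟩
        rintro ⟨l1, r1, hi1⟩
        have := eq_of_mem_toFamilies hd hi hi1
        exact (Fin.succ_ne_zero l1) (congrArg Prod.fst this).symm
  · rcases Fin.eq_zero_or_eq_succ s2 with rfl | ⟨r, rfl⟩
    · rw [toFam_succ_zero]
      ext i
      simp only [Finset.mem_sdiff, Finset.mem_biUnion, Finset.mem_univ, true_and]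
      constructor
      · rintro ⟨⟨r0, hr0⟩, hno⟩
        rcases Fin.eq_zero_or_eq_succ r0 with rfl | ⟨r1, rfl⟩
        · exact hr0
        · exact absurd ⟨r1, l.succ, hr0⟩ hno
      · intro hi
        refine ⟨⟨0, hi⟩, ?_⟩
        rintro ⟨r1, l1, hi1⟩
        have := eq_of_mem_toFamilies hd hi hi1
        exact (Fin.succ_ne_zero r1) (congrArg Prod.snd this).symm
    · rw [toFam_succ_succ]
      ext i
      simp only [Finset.mem_inter, Finset.mem_biUnion, Finset.mem_univ, true_and]
      constructor
      · rintro ⟨⟨r0, hr0⟩, ⟨l0, hl0⟩⟩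
        have h := eq_of_mem_toFamilies hd hr0 hl0
        obtain ⟨h1, h2⟩ := Prod.mk.injEq .. ▸ h
        rw [← h1] at hl0
        rw [h2] at hr0
        exact hr0
      · intro hi
        exact ⟨⟨r.succ, hi⟩, ⟨l.succ, hi⟩⟩

lemma sum_card_row (hc : ∀ l l', l ≠ l' → Disjoint (c l) (c l'))
    (he : ∀ r r', r ≠ r' → Disjoint (e r) (e r')) (l : Fin a) :
    ∑ r : Fin (b + 1), (toFam c e (l.succ, r)).card = (c l).card := by
  rw [← biUnion_row (c := c) (e := e) l, Finset.card_biUnion]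
  intro x _ y _ hxy
  exact toFam_disjoint hc he _ _ (by simp [Prod.ext_iff, hxy])

lemma sum_card_col (hc : ∀ l l', l ≠ l' → Disjoint (c l) (c l'))
    (he : ∀ r r', r ≠ r' → Disjoint (e r) (e r')) (r : Fin b) :
    ∑ l : Fin (a + 1), (toFam c e (l, r.succ)).card = (e r).card := by
  rw [← biUnion_col (c := c) (e := e) r, Finset.card_biUnion]
  intro x _ y _ hxy
  exact toFam_disjoint hc he _ _ (by simp [Prod.ext_iff, hxy])

variable {d : ℕ} {𝕂 : Type} [CommSemiring 𝕂]
  {p : Fin a → MvPolynomial (Fin d) 𝕂} {q : Fin b → MvPolynomial (Fin d) 𝕂}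

@[simp] lemma pqFamily_zero_zero : pqFamily 𝕂 p q (0, 0) = 1 := by simp [pqFamily]

@[simp] lemma pqFamily_zero_succ (r : Fin b) : pqFamily 𝕂 p q (0, r.succ) = q r := by
  simp [pqFamily, Fin.succ_ne_zero]

@[simp] lemma pqFamily_succ_zero (l : Fin a) : pqFamily 𝕂 p q (l.succ, 0) = p l := by
  simp [pqFamily, Fin.succ_ne_zero]

@[simp] lemma pqFamily_succ_succ (l : Fin a) (r : Fin b) :
    pqFamily 𝕂 p q (l.succ, r.succ) = p l * q r := by
  simp [pqFamily, Fin.succ_ne_zero]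

lemma prod_toFam (hc : ∀ l l', l ≠ l' → Disjoint (c l) (c l'))
    (he : ∀ r r', r ≠ r' → Disjoint (e r) (e r')) :
    (∏ l, ∏ i ∈ c l, substAt n d 𝕂 i (p l)) * (∏ r, ∏ i ∈ e r, substAt n d 𝕂 i (q r))
      = ∏ s, ∏ i ∈ toFam c e s, substAt n d 𝕂 i (pqFamily 𝕂 p q s) := by
  classical
  have hpd : ∀ (f g : Fin (a+1) × Fin (b+1)), f ≠ g → Disjoint (toFam c e f) (toFam c e g) :=
    toFam_disjoint hc he
  have hrow : ∀ l : Fin a, ∏ i ∈ c l, substAt n d 𝕂 i (p l)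
      = (∏ i ∈ toFam c e (l.succ, 0), substAt n d 𝕂 i (p l)) *
        ∏ r : Fin b, ∏ i ∈ toFam c e (l.succ, r.succ), substAt n d 𝕂 i (p l) := by
    intro l
    rw [← biUnion_row (c := c) (e := e) l, Finset.prod_biUnion, Fin.prod_univ_succ]
    intro x _ y _ hxy
    exact hpd _ _ (by simp [Prod.ext_iff, hxy])
  have hcol : ∀ r : Fin b, ∏ i ∈ e r, substAt n d 𝕂 i (q r)
      = (∏ i ∈ toFam c e (0, r.succ), substAt n d 𝕂 i (q r)) *
        ∏ l : Fin a, ∏ i ∈ toFam c e (l.succ, r.succ), substAt n d 𝕂 i (q r) := by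
    intro r
    rw [← biUnion_col (c := c) (e := e) r, Finset.prod_biUnion, Fin.prod_univ_succ]
    intro x _ y _ hxy
    exact hpd _ _ (by simp [Prod.ext_iff, hxy])
  have hmul : ∀ (i : Fin n) (u v : MvPolynomial (Fin d) 𝕂),
      substAt n d 𝕂 i (u * v) = substAt n d 𝕂 i u * substAt n d 𝕂 i v := by
    intro i u v; simp [substAt]
  conv_rhs => rw [Fintype.prod_prod_type]
  simp only [Fin.prod_univ_succ, toFam_zero_zero, Finset.prod_empty, pqFamily_zero_zero,
    pqFamily_zero_succ, pqFamily_succ_zero, pqFamily_succ_succ, one_mul, hmul,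
    Finset.prod_mul_distrib]
  simp only [hrow, hcol, Finset.prod_mul_distrib]
  have hswap : ∏ r : Fin b, ∏ l : Fin a, ∏ i ∈ toFam c e (l.succ, r.succ), substAt n d 𝕂 i (q r)
      = ∏ l : Fin a, ∏ r : Fin b, ∏ i ∈ toFam c e (l.succ, r.succ), substAt n d 𝕂 i (q r) :=
    Finset.prod_comm
  rw [hswap]
  ring

end Aux

set_option maxHeartbeats 2000000 in
/-- Vaccarino's product formula:
`e_α(p) e_β(q) = Σ_{γ ∈ L(α,β,n)} e_γ(p,q,pq)`. -/
theorem vaccarino_product_formula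
    (n d a b : ℕ) (hn : 0 < n) (hd : 0 < d) (ha : 0 < a) (hb : 0 < b)
    (𝕂 : Type) [Field 𝕂] [CharZero 𝕂]
    (p : Fin a → MvPolynomial (Fin d) 𝕂) (q : Fin b → MvPolynomial (Fin d) 𝕂)
    (α : Fin a → ℕ) (β : Fin b → ℕ) (hα : ∑ l, α l ≤ n) (hβ : ∑ r, β r ≤ n) :
    esym n d 𝕂 p α * esym n d 𝕂 q β
      = ∑ᶠ (γ : Fin (a + 1) × Fin (b + 1) → ℕ)
          (_ : γ (0, 0) = 0 ∧ (∑ s, γ s ≤ n) ∧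
               (∀ l : Fin a, ∑ r : Fin (b + 1), γ (l.succ, r) = α l) ∧
               (∀ r : Fin b, ∑ l : Fin (a + 1), γ (l, r.succ) = β r)),
          esym n d 𝕂 (pqFamily 𝕂 p q) γ := by
  classical
  set Pred : (Fin (a + 1) × Fin (b + 1) → ℕ) → Prop := fun γ =>
    γ (0, 0) = 0 ∧ (∑ s, γ s ≤ n) ∧
    (∀ l : Fin a, ∑ r : Fin (b + 1), γ (l.succ, r) = α l) ∧
    (∀ r : Fin b, ∑ l : Fin (a + 1), γ (l, r.succ) = β r) with hPred
  set A : Finset (Fin a → Finset (Fin n)) := Finset.univ.filter (fun c =>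
    (∀ s, (c s).card = α s) ∧ ∀ s t, s ≠ t → Disjoint (c s) (c t)) with hA
  set B : Finset (Fin b → Finset (Fin n)) := Finset.univ.filter (fun c =>
    (∀ s, (c s).card = β s) ∧ ∀ s t, s ≠ t → Disjoint (c s) (c t)) with hB
  set S' : Finset (Fin (a + 1) × Fin (b + 1) → Finset (Fin n)) :=
    Finset.univ.filter (fun c' =>
      (∀ s t, s ≠ t → Disjoint (c' s) (c' t)) ∧ c' (0, 0) = ∅ ∧
      (∀ l : Fin a, ∑ r : Fin (b + 1), (c' (l.succ, r)).card = α l) ∧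
      (∀ r : Fin b, ∑ l : Fin (a + 1), (c' (l, r.succ)).card = β r)) with hS'
  set T0 : Finset (Fin (a + 1) × Fin (b + 1) → ℕ) :=
    Fintype.piFinset (fun _ => Finset.range (n + 1)) with hT0
  have step1 : esym n d 𝕂 p α * esym n d 𝕂 q β
      = ∑ ce ∈ A ×ˢ B,
        (∏ l, ∏ i ∈ ce.1 l, substAt n d 𝕂 i (p l)) *
        (∏ r, ∏ i ∈ ce.2 r, substAt n d 𝕂 i (q r)) := by
    rw [esym, esym, Finset.sum_mul_sum]
    rw [← Finset.sum_product (f := fun ce : (Fin a → Finset (Fin n)) × (Fin b → Finset (Fin n)) =>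
      (∏ l, ∏ i ∈ ce.1 l, substAt n d 𝕂 i (p l)) *
      (∏ r, ∏ i ∈ ce.2 r, substAt n d 𝕂 i (q r)))]
    rw [hA, hB]
    congr 2 <;> exact Finset.filter_congr_decidable ..
  have step2 : (∑ ce ∈ A ×ˢ B,
        (∏ l, ∏ i ∈ ce.1 l, substAt n d 𝕂 i (p l)) *
        (∏ r, ∏ i ∈ ce.2 r, substAt n d 𝕂 i (q r)))
      = ∑ c' ∈ S', ∏ s, ∏ i ∈ c' s, substAt n d 𝕂 i (pqFamily 𝕂 p q s) := by
    refine Finset.sum_nbij' (fun ce => toFam ce.1 ce.2)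
      (fun c' => (fun l => Finset.univ.biUnion fun r => c' (l.succ, r),
                  fun r => Finset.univ.biUnion fun l => c' (l, r.succ)))
      ?_ ?_ ?_ ?_ ?_
    · rintro ⟨c, e⟩ hce
      rw [Finset.mem_product, hA, hB] at hce
      simp only [Finset.mem_filter, Finset.mem_univ, true_and] at hce
      obtain ⟨⟨hcc, hdc⟩, ⟨hce2, hde⟩⟩ := hce
      rw [hS']
      refine Finset.mem_filter.2 ⟨Finset.mem_univ _, toFam_disjoint hdc hde, toFam_zero_zero,
        fun l => ?_, fun r => ?_⟩
      · rw [sum_card_row hdc hde]; exact hcc l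
      · rw [sum_card_col hdc hde]; exact hce2 r
    · intro c' hc'
      rw [hS'] at hc'
      simp only [Finset.mem_filter, Finset.mem_univ, true_and] at hc'
      obtain ⟨hdisj, h00, hrow, hcol⟩ := hc'
      rw [Finset.mem_product, hA, hB]
      constructor
      · simp only [Finset.mem_filter, Finset.mem_univ, true_and]
        constructor
        · intro l
          rw [← hrow l, Finset.card_biUnion]
          intro x _ y _ hxy
          exact hdisj _ _ (by simp [Prod.ext_iff, hxy])
        · intro l l' hll'
          rw [Finset.disjoint_biUnion_left]
          intro r _
          rw [Finset.disjoint_biUnion_right]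
          intro r' _
          exact hdisj _ _ (by simp [Prod.ext_iff, Fin.succ_inj, hll'])
      · simp only [Finset.mem_filter, Finset.mem_univ, true_and]
        constructor
        · intro r
          rw [← hcol r, Finset.card_biUnion]
          intro x _ y _ hxy
          exact hdisj _ _ (by simp [Prod.ext_iff, hxy])
        · intro r r' hrr'
          rw [Finset.disjoint_biUnion_left]
          intro l _
          rw [Finset.disjoint_biUnion_right]
          intro l' _
          exact hdisj _ _ (by simp [Prod.ext_iff, Fin.succ_inj, hrr'])
    · rintro ⟨c, e⟩ hce
      exact Prod.ext (funext fun l => biUnion_row l) (funext fun r => biUnion_col r)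
    · intro c' hc'
      rw [hS'] at hc'
      simp only [Finset.mem_filter, Finset.mem_univ, true_and] at hc'
      exact toFam_toPair c' hc'.1 hc'.2.1
    · rintro ⟨c, e⟩ hce
      rw [Finset.mem_product, hA, hB] at hce
      simp only [Finset.mem_filter, Finset.mem_univ, true_and] at hce
      exact prod_toFam hce.1.2 hce.2.2
  have hmaps : ∀ c' ∈ S', (fun s => ((c' s).card)) ∈ T0.filter Pred := by
    intro c' hc'
    rw [hS'] at hc'
    simp only [Finset.mem_filter, Finset.mem_univ, true_and] at hc'
    obtain ⟨hdisj, h00, hrow, hcol⟩ := hc'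
    rw [Finset.mem_filter, hT0, hPred]
    refine ⟨Fintype.mem_piFinset.2 fun s => Finset.mem_range.2 (Nat.lt_succ_of_le ?_),
      ?_, ?_, hrow, hcol⟩
    · simpa using Finset.card_le_univ (c' s)
    · show (c' (0, 0)).card = 0
      rw [h00]; simp
    · show ∑ s : Fin (a + 1) × Fin (b + 1), (c' s).card ≤ n
      rw [← Finset.card_biUnion (fun x _ y _ h => hdisj x y h)]
      simpa using Finset.card_le_univ (Finset.univ.biUnion c')
  have step3 : (∑ c' ∈ S', ∏ s, ∏ i ∈ c' s, substAt n d 𝕂 i (pqFamily 𝕂 p q s))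
      = ∑ γ ∈ T0.filter Pred, esym n d 𝕂 (pqFamily 𝕂 p q) γ := by
    rw [← Finset.sum_fiberwise_of_maps_to hmaps
      (fun c' => ∏ s, ∏ i ∈ c' s, substAt n d 𝕂 i (pqFamily 𝕂 p q s))]
    refine Finset.sum_congr rfl fun γ hγ => ?_
    rw [Finset.mem_filter, hPred] at hγ
    obtain ⟨-, h0, hsum, hrowγ, hcolγ⟩ := hγ
    rw [esym]
    congr 1
    ext c'
    rw [hS']
    simp only [Finset.mem_filter, Finset.mem_univ, true_and]
    constructor
    · rintro ⟨⟨hdisj, -, -, -⟩, hcards⟩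
      exact ⟨fun s => congrFun hcards s, hdisj⟩
    · rintro ⟨hcards, hdisj⟩
      refine ⟨⟨hdisj, ?_, fun l => ?_, fun r => ?_⟩, funext hcards⟩
      · exact Finset.card_eq_zero.1 (by rw [hcards]; exact h0)
      · simp only [hcards]; exact hrowγ l
      · simp only [hcards]; exact hcolγ r
  have hsupp : (Function.support fun γ =>
      if Pred γ then esym n d 𝕂 (pqFamily 𝕂 p q) γ else 0) ⊆ ↑T0 := by
    intro γ hγ
    have hp : Pred γ := by
      by_contra h
      simp [h] at hγ
    rw [hT0]
    refine Finset.mem_coe.2 (Fintype.mem_piFinset.2 fun s => Finset.mem_range.2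
      (Nat.lt_succ_of_le (le_trans ?_ hp.2.1)))
    exact Finset.single_le_sum (fun i _ => Nat.zero_le _) (Finset.mem_univ s)
  calc esym n d 𝕂 p α * esym n d 𝕂 q β
      = ∑ γ ∈ T0.filter Pred, esym n d 𝕂 (pqFamily 𝕂 p q) γ := by
        rw [step1, step2, step3]
    _ = ∑ γ ∈ T0, if Pred γ then esym n d 𝕂 (pqFamily 𝕂 p q) γ else 0 :=
        Finset.sum_filter _ _
    _ = ∑ᶠ γ, if Pred γ then esym n d 𝕂 (pqFamily 𝕂 p q) γ else 0 :=
        (finsum_eq_sum_of_support_subset _ hsupp).symm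
    _ = ∑ᶠ (γ) (_ : Pred γ), esym n d 𝕂 (pqFamily 𝕂 p q) γ :=
        finsum_congr fun γ => finsum_eq_if.symm
end
end

section
/- The elementary multi-symmetric functions generate the invariant ring: the 𝕂-subalgebra of R = 𝕂[x_{ij} : i ∈ [n], j ∈ [d]] generated by {e_k : k ∈ ℕ^d, 1 ≤ |k| ≤ n} equals the subalgebra R^{S_n} of polynomials invariant under the S_n-action permuting the index i (x_{ij} ↦ x_{σ(i)j}). -/
open MvPolynomial

noncomputable section

/-- The subalgebra `R^{S_n}` of polynomials invariant under the `S_n`-action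
`x_{ij} ↦ x_{σ(i)j}`. -/
def symInvariants (n d : ℕ) (𝕂 : Type) [CommSemiring 𝕂] :
    Subalgebra 𝕂 (MvPolynomial (Fin n × Fin d) 𝕂) where
  carrier := {f | ∀ σ : Equiv.Perm (Fin n),
    rename (fun s : Fin n × Fin d => (σ s.1, s.2)) f = f}
  mul_mem' := fun hf hg σ => by rw [map_mul, hf σ, hg σ]
  add_mem' := fun hf hg σ => by rw [map_add, hf σ, hg σ]
  algebraMap_mem' := fun r σ => by
    rw [MvPolynomial.algebraMap_eq, rename_C]

namespace MultiSymAux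

open Finset

variable {n d : ℕ} {𝕂 : Type} [Field 𝕂] [CharZero 𝕂]

/-- The monomial `x_i^k = ∏_j x_{ij}^{k_j}`. -/
def xpow (i : Fin n) (k : Fin d → ℕ) : MvPolynomial (Fin n × Fin d) 𝕂 :=
  ∏ j, X (i, j) ^ k j

/-- The multivariate power sum `p_k = ∑_i x_i^k`. -/
def Psum (k : Fin d → ℕ) : MvPolynomial (Fin n × Fin d) 𝕂 :=
  ∑ i, xpow i k

/-- Symmetrized monomial sums. -/
def Jsum (a : Fin n → Fin d → ℕ) : MvPolynomial (Fin n × Fin d) 𝕂 :=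
  ∑ σ : Equiv.Perm (Fin n), ∏ i, xpow (σ i) (a i)

/-- Number of `i` with `h i = some j`. -/
def cnt (h : Fin n → Option (Fin d)) : Fin d → ℕ :=
  fun j => (Finset.univ.filter fun i => h i = some j).card

/-- The monomial attached to a partial function `h`. -/
def hterm (h : Fin n → Option (Fin d)) : MvPolynomial (Fin n × Fin d) 𝕂 :=
  ∏ i, (h i).elim 1 fun j => X (i, j)

/-- Partial functions with fiber counts `k`. -/
def Hk (k : Fin d → ℕ) : Finset (Fin n → Option (Fin d)) :=
  Finset.univ.filter fun h => cnt h = k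

@[simp] lemma xpow_zero (i : Fin n) : (xpow i 0 : MvPolynomial (Fin n × Fin d) 𝕂) = 1 := by
  simp [xpow]

lemma xpow_add (i : Fin n) (k l : Fin d → ℕ) :
    (xpow i (k + l) : MvPolynomial (Fin n × Fin d) 𝕂) = xpow i k * xpow i l := by
  simp [xpow, pow_add, Finset.prod_mul_distrib]

lemma rename_xpow (σ : Equiv.Perm (Fin n)) (i : Fin n) (k : Fin d → ℕ) :
    rename (fun s : Fin n × Fin d => (σ s.1, s.2)) (xpow i k : MvPolynomial (Fin n × Fin d) 𝕂)
      = xpow (σ i) k := by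
  simp [xpow]

/-- from `c` (disjoint tuple of subsets) to a partial function. -/
def hOf (c : Fin d → Finset (Fin n)) (i : Fin n) : Option (Fin d) :=
  if hx : ∃ j, i ∈ c j then some hx.choose else none

lemma hOf_eq_some {c : Fin d → Finset (Fin n)}
    (hc : ∀ s t, s ≠ t → Disjoint (c s) (c t)) {i : Fin n} {j : Fin d} :
    hOf c i = some j ↔ i ∈ c j := by
  constructor
  · intro h
    by_cases hx : ∃ j', i ∈ c j'
    · have := hx.choose_spec
      simp only [hOf, dif_pos hx, Option.some.injEq] at h
      rwa [← h]
    · simp [hOf, dif_neg hx] at h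
  · intro h
    have hx : ∃ j', i ∈ c j' := ⟨j, h⟩
    have hspec := hx.choose_spec
    have : hx.choose = j := by
      by_contra hne
      exact (Finset.disjoint_left.mp (hc _ _ hne) hspec) h
    simp [hOf, dif_pos hx, this]

lemma hOf_eq_none {c : Fin d → Finset (Fin n)} {i : Fin n} :
    hOf c i = none ↔ ∀ j, i ∉ c j := by
  constructor
  · intro h j hij
    simp [hOf, dif_pos (⟨j, hij⟩ : ∃ j', i ∈ c j')] at h
  · intro h
    simp [hOf, dif_neg (by push_neg; exact h : ¬ ∃ j, i ∈ c j)]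

/-- The key combinatorial reindexing: `esym` at the variables, as a sum over
partial functions. -/
lemma esym_eq_sum_hterm (k : Fin d → ℕ) :
    esym n d 𝕂 (fun j => X j) k = ∑ h ∈ Hk (n := n) k, hterm h := by
  classical
  have hsub : ∀ (i : Fin n) (j : Fin d),
      substAt n d 𝕂 i (X j) = X (i, j) := by
    intro i j; simp [substAt]
  rw [esym]
  refine Finset.sum_nbij' (i := fun c => hOf c)
    (j := fun h => fun j => Finset.univ.filter fun i => h i = some j) ?_ ?_ ?_ ?_ ?_
  · -- maps to Hk
    intro c hc
    simp only [Finset.mem_filter, Finset.mem_univ, true_and] at hc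
    obtain ⟨hcard, hdisj⟩ := hc
    simp only [Hk, Finset.mem_filter, Finset.mem_univ, true_and]
    funext j
    rw [← hcard j, cnt]
    congr 1
    ext i
    simp [hOf_eq_some hdisj]
  · -- maps back
    intro h hh
    simp only [Hk, Finset.mem_filter, Finset.mem_univ, true_and] at hh
    simp only [Finset.mem_filter, Finset.mem_univ, true_and]
    refine ⟨ fun j => by rw [← hh]; rfl, ?_⟩
    intro s t hst
    simp only [Finset.disjoint_left, Finset.mem_filter]
    rintro i ⟨-, hi⟩ ⟨-, hi'⟩
    rw [hi] at hi'
    exact hst (Option.some_inj.mp hi')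
  · -- left inverse
    intro c hc
    simp only [Finset.mem_filter, Finset.mem_univ, true_and] at hc
    obtain ⟨hcard, hdisj⟩ := hc
    funext j
    ext i
    simp [hOf_eq_some hdisj]
  · -- right inverse
    intro h hh
    funext i
    have hdisj : ∀ s t, s ≠ t → Disjoint ((fun j => Finset.univ.filter fun i => h i = some j) s)
        ((fun j => Finset.univ.filter fun i => h i = some j) t) := by
      intro s t hst
      simp only [Finset.disjoint_left, Finset.mem_filter]
      rintro i ⟨-, hi⟩ ⟨-, hi'⟩
      rw [hi] at hi'
      exact hst (Option.some_inj.mp hi')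
    cases hi : h i with
    | none =>
      rw [hOf_eq_none]
      intro j
      simp [hi]
    | some j =>
      rw [hOf_eq_some hdisj]
      simp [hi]
  · -- values
    intro c hc
    simp only [Finset.mem_filter, Finset.mem_univ, true_and] at hc
    obtain ⟨hcard, hdisj⟩ := hc
    simp only [hsub]
    have fib : ∀ j : Fin d, (Finset.univ.filter fun i => hOf c i = some j) = c j := by
      intro j; ext i; simp [hOf_eq_some hdisj]
    rw [hterm,
      ← Finset.prod_fiberwise_of_maps_to (g := hOf c) (t := Finset.univ)
        (fun i _ => Finset.mem_univ _) (fun i => (hOf c i).elim 1 fun j => X (i, j))]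
    have hfibprod : ∀ o : Option (Fin d),
        (∏ i ∈ Finset.univ.filter fun i => hOf c i = o, (hOf c i).elim 1 fun j => X (i, j))
          = ∏ i ∈ Finset.univ.filter fun i => hOf c i = o,
              (Option.elim o (1 : MvPolynomial (Fin n × Fin d) 𝕂) fun j => X (i, j)) := by
      intro o
      refine Finset.prod_congr rfl fun i hi => ?_
      simp only [Finset.mem_filter] at hi
      rw [hi.2]
    rw [Finset.prod_congr rfl fun o _ => hfibprod o]
    rw [Fintype.prod_option (fun o : Option (Fin d) =>
      ∏ i ∈ Finset.univ.filter fun i => hOf c i = o,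
        (Option.elim o (1 : MvPolynomial (Fin n × Fin d) 𝕂) fun j => X (i, j)))]
    simp only [Option.elim_none, Option.elim_some, Finset.prod_const_one, one_mul]
    refine Finset.prod_congr rfl fun j _ => ?_
    rw [fib j]

lemma rename_hterm (σ : Equiv.Perm (Fin n)) (h : Fin n → Option (Fin d)) :
    rename (fun s : Fin n × Fin d => (σ s.1, s.2)) (hterm h : MvPolynomial (Fin n × Fin d) 𝕂)
      = hterm (h ∘ ⇑σ⁻¹) := by
  rw [hterm, map_prod]
  have h1 : ∀ i, rename (fun s : Fin n × Fin d => (σ s.1, s.2))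
      ((h i).elim (1 : MvPolynomial (Fin n × Fin d) 𝕂) fun j => X (i, j))
        = (h i).elim 1 fun j => X (σ i, j) := by
    intro i; cases h i <;> simp
  rw [Finset.prod_congr rfl fun i _ => h1 i, hterm,
    ← Equiv.prod_comp σ (fun i => ((h ∘ ⇑σ⁻¹) i).elim
        (1 : MvPolynomial (Fin n × Fin d) 𝕂) fun j => X (i, j))]
  exact Finset.prod_congr rfl fun i _ => by simp

lemma cnt_comp (σ : Equiv.Perm (Fin n)) (h : Fin n → Option (Fin d)) :
    cnt (h ∘ ⇑σ) = cnt h := by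
  funext j
  refine Finset.card_bij' (fun i _ => σ i) (fun i _ => σ⁻¹ i) ?_ ?_ ?_ ?_
  · intro i hi
    simp only [Finset.mem_filter, Finset.mem_univ, true_and, Function.comp_apply] at hi ⊢
    exact hi
  · intro i hi
    simp only [Finset.mem_filter, Finset.mem_univ, true_and, Function.comp_apply] at hi ⊢
    simpa using hi
  · intro i _; simp
  · intro i _; simp

lemma rename_esym (σ : Equiv.Perm (Fin n)) (k : Fin d → ℕ) :
    rename (fun s : Fin n × Fin d => (σ s.1, s.2)) (esym n d 𝕂 (fun j => X j) k)
      = esym n d 𝕂 (fun j => X j) k := by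
  rw [esym_eq_sum_hterm, map_sum,
    Finset.sum_congr rfl fun h _ => rename_hterm σ h]
  refine Finset.sum_nbij' (i := fun h => h ∘ ⇑σ⁻¹) (j := fun h => h ∘ ⇑σ) ?_ ?_ ?_ ?_ ?_
  · intro h hh
    simp only [Hk, Finset.mem_filter, Finset.mem_univ, true_and] at *
    rw [cnt_comp σ⁻¹ h, hh]
  · intro h hh
    simp only [Hk, Finset.mem_filter, Finset.mem_univ, true_and] at *
    rw [cnt_comp σ h, hh]
  · intro h _; funext i; simp
  · intro h _; funext i; simp
  · intro h _; rfl

lemma esym_zero' : esym n d 𝕂 (fun j => X j) (0 : Fin d → ℕ) = 1 := by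
  rw [esym_eq_sum_hterm]
  have hH : Hk (n := n) (d := d) (0 : Fin d → ℕ) = {fun _ => none} := by
    ext h
    simp only [Hk, Finset.mem_filter, Finset.mem_univ, true_and, Finset.mem_singleton]
    constructor
    · intro hcnt
      funext i
      rcases hh : h i with _ | j
      · rfl
      · exfalso
        have hj : cnt h j = 0 := congrFun hcnt j
        have : i ∈ Finset.univ.filter fun i => h i = some j := by
          simp [hh]
        rw [cnt, Finset.card_eq_zero] at hj
        simp [hj] at this
    · rintro rfl
      funext j
      simp [cnt]
  rw [hH, Finset.sum_singleton, hterm]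
  simp

lemma sum_cnt_le (h : Fin n → Option (Fin d)) : ∑ j, cnt h j ≤ n := by
  have hcard : (Finset.univ : Finset (Fin n)).card
      = ∑ o : Option (Fin d), (Finset.univ.filter fun i => h i = o).card :=
    Finset.card_eq_sum_card_fiberwise fun i _ => Finset.mem_univ (h i)
  rw [Finset.card_univ, Fintype.card_fin] at hcard
  rw [Fintype.sum_option] at hcard
  have : ∑ j, cnt h j = ∑ j : Fin d, (Finset.univ.filter fun i => h i = some j).card := rfl
  omega

lemma esym_eq_zero_of_lt (k : Fin d → ℕ) (hk : n < ∑ j, k j) :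
    esym n d 𝕂 (fun j => X j) k = 0 := by
  rw [esym_eq_sum_hterm]
  have hH : Hk (n := n) (d := d) k = ∅ := by
    ext h
    simp only [Hk, Finset.mem_filter, Finset.mem_univ, true_and, Finset.notMem_empty,
      iff_false]
    intro hcnt
    have := sum_cnt_le h
    rw [hcnt] at this
    omega
  rw [hH, Finset.sum_empty]

/-- The generating set from the theorem statement. -/
def genSet (n d : ℕ) (𝕂 : Type) [Field 𝕂] : Set (MvPolynomial (Fin n × Fin d) 𝕂) :=
  {f : MvPolynomial (Fin n × Fin d) 𝕂 |
    ∃ k : Fin d → ℕ, 1 ≤ ∑ j, k j ∧ ∑ j, k j ≤ n ∧ f = esym n d 𝕂 (fun j => X j) k}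

lemma esym_mem (k : Fin d → ℕ) :
    esym n d 𝕂 (fun j => X j) k ∈ Algebra.adjoin 𝕂 (genSet n d 𝕂) := by
  rcases Nat.eq_zero_or_pos (∑ j, k j) with h0 | hpos
  · have hk0 : k = 0 := funext fun j => Finset.sum_eq_zero_iff.mp h0 j (Finset.mem_univ j)
    rw [hk0, esym_zero']
    exact one_mem _
  · rcases le_or_gt (∑ j, k j) n with hle | hlt
    · exact Algebra.subset_adjoin ⟨k, hpos, hle, rfl⟩
    · rw [esym_eq_zero_of_lt k hlt]
      exact zero_mem _

/-! ### Transfer: power sums belong to the adjoin of the `esym`'s -/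

/-- Auxiliary linear forms in new variables `t_j` with coefficients `x_{ij}`. -/
def uu (i : Fin n) : MvPolynomial (Fin d) (MvPolynomial (Fin n × Fin d) 𝕂) :=
  ∑ j, X j * C (X (i, j))

lemma prod_monomial {ι : Type} {A : Type} [CommSemiring A] (s : Finset ι)
    (f : ι → (Fin d →₀ ℕ)) (b : ι → A) :
    (∏ i ∈ s, (monomial (f i) (b i) : MvPolynomial (Fin d) A))
      = monomial (∑ i ∈ s, f i) (∏ i ∈ s, b i) := by
  induction s using Finset.cons_induction with
  | empty => simp
  | cons a s ha ih =>
      rw [Finset.prod_cons, ih, Finset.sum_cons, Finset.prod_cons, monomial_mul]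

lemma single_sum_eq (h : Fin n → Option (Fin d)) :
    (∑ i, (h i).elim (0 : Fin d →₀ ℕ) fun j => Finsupp.single j 1)
      = Finsupp.equivFunOnFinite.symm (cnt h) := by
  ext j
  rw [Finsupp.finset_sum_apply]
  have : ∀ i : Fin n, ((h i).elim (0 : Fin d →₀ ℕ) fun j' => Finsupp.single j' 1) j
      = if h i = some j then 1 else 0 := by
    intro i
    rcases hh : h i with _ | j'
    · simp
    · simp [Finsupp.single_apply]
  rw [Finset.sum_congr rfl fun i _ => this i]
  have : Finsupp.equivFunOnFinite.symm (cnt (n := n) h) j = cnt h j := rfl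
  rw [this, cnt, Finset.card_filter]

lemma prod_one_add_uu :
    (∏ i, (1 + uu i) : MvPolynomial (Fin d) (MvPolynomial (Fin n × Fin d) 𝕂))
      = ∑ h : Fin n → Option (Fin d),
          monomial (Finsupp.equivFunOnFinite.symm (cnt h)) (hterm h) := by
  have h1 : ∀ i : Fin n, (1 + uu i : MvPolynomial (Fin d) (MvPolynomial (Fin n × Fin d) 𝕂))
      = ∑ o : Option (Fin d), Option.elim o 1 (fun j => X j * C (X (i, j))) := by
    intro i
    rw [Fintype.sum_option]
    rfl
  rw [Finset.prod_congr rfl fun i _ => h1 i]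
  rw [Finset.prod_univ_sum, Fintype.piFinset_univ]
  refine Finset.sum_congr rfl fun h _ => ?_
  have h2 : ∀ i : Fin n,
      (Option.elim (h i) (1 : MvPolynomial (Fin d) (MvPolynomial (Fin n × Fin d) 𝕂))
        fun j => X j * C (X (i, j)))
      = monomial ((h i).elim 0 fun j => Finsupp.single j 1)
          ((h i).elim 1 fun j => (X (i, j) : MvPolynomial (Fin n × Fin d) 𝕂)) := by
    intro i
    rcases hh : h i with _ | j
    · simp
    · simp only [Option.elim_some]
      rw [mul_comm, C_mul_X_eq_monomial]
  rw [Finset.prod_congr rfl fun i _ => h2 i, prod_monomial, single_sum_eq]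
  rfl

lemma coeff_prod_one_add_uu (k : Fin d → ℕ) :
    coeff (Finsupp.equivFunOnFinite.symm k)
        (∏ i, (1 + uu i) : MvPolynomial (Fin d) (MvPolynomial (Fin n × Fin d) 𝕂))
      = esym n d 𝕂 (fun j => X j) k := by
  rw [prod_one_add_uu, esym_eq_sum_hterm, coeff_sum]
  simp only [coeff_monomial, EmbeddingLike.apply_eq_iff_eq]
  rw [← Finset.sum_filter]
  rfl

lemma aeval_esymm_eq (r : ℕ) :
    aeval (uu : Fin n → MvPolynomial (Fin d) (MvPolynomial (Fin n × Fin d) 𝕂))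
        (MvPolynomial.esymm (Fin n) 𝕂 r)
      = ∑ S ∈ Finset.powersetCard r Finset.univ, ∏ i ∈ S, uu i := by
  rw [MvPolynomial.esymm, map_sum]
  exact Finset.sum_congr rfl fun S _ => by
    rw [map_prod]
    exact Finset.prod_congr rfl fun i _ => aeval_X _ _

lemma isHomogeneous_prod_uu (S : Finset (Fin n)) :
    IsHomogeneous (∏ i ∈ S, (uu i : MvPolynomial (Fin d) (MvPolynomial (Fin n × Fin d) 𝕂)))
      S.card := by
  have hc : S.card = ∑ _i ∈ S, 1 := by simp
  rw [hc]
  refine IsHomogeneous.prod S _ _ fun i _ => ?_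
  rw [uu]
  refine IsHomogeneous.sum _ _ _ fun j _ => ?_
  simpa using (isHomogeneous_X _ j).mul (isHomogeneous_C _ (X (i, j)))

lemma degree_eq_sum (m : Fin d →₀ ℕ) : m.degree = ∑ j, m j := by
  rw [Finsupp.degree]
  exact Finset.sum_subset (Finset.subset_univ _)
    fun j _ hj => Finsupp.notMem_support_iff.mp hj

lemma coeff_aeval_esymm_ne (r : ℕ) (m : Fin d →₀ ℕ) (hm : ∑ j, m j ≠ r) :
    coeff m (aeval (uu : Fin n → MvPolynomial (Fin d) (MvPolynomial (Fin n × Fin d) 𝕂))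
      (MvPolynomial.esymm (Fin n) 𝕂 r)) = 0 := by
  rw [aeval_esymm_eq, coeff_sum]
  refine Finset.sum_eq_zero fun S hS => ?_
  have hcard : S.card = r := (Finset.mem_powersetCard.mp hS).2
  refine (isHomogeneous_prod_uu S).coeff_eq_zero ?_
  rw [hcard, degree_eq_sum]
  exact hm

lemma esymm_gt (r : ℕ) (hr : n < r) : MvPolynomial.esymm (Fin n) 𝕂 r = 0 := by
  rw [MvPolynomial.esymm, Finset.powersetCard_eq_empty.mpr (by simpa using hr),
    Finset.sum_empty]

lemma prod_one_add_uu_eq_sum_esymm :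
    (∏ i, (1 + uu i) : MvPolynomial (Fin d) (MvPolynomial (Fin n × Fin d) 𝕂))
      = ∑ r ∈ Finset.range (n + 1),
          aeval (uu : Fin n → MvPolynomial (Fin d) (MvPolynomial (Fin n × Fin d) 𝕂))
            (MvPolynomial.esymm (Fin n) 𝕂 r) := by
  have h1 : ∀ i : Fin n, (1 + uu i : MvPolynomial (Fin d) (MvPolynomial (Fin n × Fin d) 𝕂))
      = uu i + 1 := fun i => add_comm _ _
  rw [Finset.prod_congr rfl fun i _ => h1 i, Finset.prod_add]
  simp only [Finset.prod_const_one, mul_one]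
  rw [← Finset.sum_fiberwise_of_maps_to (g := Finset.card) (t := Finset.range (n + 1))
    (fun S _ => Finset.mem_range.mpr (Nat.lt_succ_of_le (by
      simpa using Finset.card_le_card (Finset.subset_univ S))))
    (fun S => ∏ i ∈ S, (uu i : MvPolynomial (Fin d) (MvPolynomial (Fin n × Fin d) 𝕂)))]
  refine Finset.sum_congr rfl fun r _ => ?_
  rw [aeval_esymm_eq]
  refine Finset.sum_congr ?_ fun S _ => rfl
  rw [Finset.powersetCard_eq_filter]

lemma coeff_aeval_esymm_mem (r : ℕ) (m : Fin d →₀ ℕ) :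
    coeff m (aeval (uu : Fin n → MvPolynomial (Fin d) (MvPolynomial (Fin n × Fin d) 𝕂))
        (MvPolynomial.esymm (Fin n) 𝕂 r))
      ∈ Algebra.adjoin 𝕂 (genSet n d 𝕂) := by
  rcases lt_or_ge n r with hr | hr
  · rw [esymm_gt r hr, map_zero, coeff_zero]
    exact zero_mem _
  rcases ne_or_eq (∑ j, m j) r with hm | hm
  · rw [coeff_aeval_esymm_ne r m hm]
    exact zero_mem _
  · have key : coeff m (∏ i, (1 + uu i) :
        MvPolynomial (Fin d) (MvPolynomial (Fin n × Fin d) 𝕂))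
        = coeff m (aeval (uu : Fin n → MvPolynomial (Fin d)
            (MvPolynomial (Fin n × Fin d) 𝕂)) (MvPolynomial.esymm (Fin n) 𝕂 r)) := by
      rw [prod_one_add_uu_eq_sum_esymm, coeff_sum]
      refine Finset.sum_eq_single_of_mem r (Finset.mem_range.mpr (by omega)) ?_
      intro r' _ hne
      exact coeff_aeval_esymm_ne r' m (by omega)
    rw [← key]
    have hme : m = Finsupp.equivFunOnFinite.symm ⇑m := by
      ext j; rfl
    rw [hme, coeff_prod_one_add_uu]
    exact esym_mem _

lemma psum_mem_adjoin (r : ℕ) :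
    MvPolynomial.psum (Fin n) 𝕂 r
      ∈ Algebra.adjoin 𝕂 (Set.range (MvPolynomial.esymm (Fin n) 𝕂)) := by
  induction r using Nat.strong_induction_on with
  | _ r ih =>
    rcases Nat.eq_zero_or_pos r with rfl | hr
    · rw [psum_zero]
      exact natCast_mem _ _
    · rw [MvPolynomial.psum_eq_mul_esymm_sub_sum (Fin n) 𝕂 r hr]
      refine sub_mem (mul_mem (mul_mem ?_ ?_) ?_) (Subalgebra.sum_mem _ fun a ha => ?_)
      · exact pow_mem (neg_mem (one_mem _)) _
      · exact natCast_mem _ _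
      · exact Algebra.subset_adjoin ⟨r, rfl⟩
      · simp only [Finset.mem_filter, Finset.HasAntidiagonal.mem_antidiagonal, Set.mem_Ioo] at ha
        obtain ⟨hsum, h0, hlt⟩ := ha
        refine mul_mem (mul_mem (pow_mem (neg_mem (one_mem _)) _)
          (Algebra.subset_adjoin ⟨a.1, rfl⟩)) (ih a.2 (by omega))

lemma coeff_mem_adjoin {S : Set (MvPolynomial (Fin d) (MvPolynomial (Fin n × Fin d) 𝕂))}
    {A : Subalgebra 𝕂 (MvPolynomial (Fin n × Fin d) 𝕂)}
    (hS : ∀ p ∈ S, ∀ m, coeff m p ∈ A) {x} (hx : x ∈ Algebra.adjoin 𝕂 S) :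
    ∀ m, coeff m x ∈ A := by
  induction hx using Algebra.adjoin_induction with
  | mem p hp => exact hS p hp
  | algebraMap r =>
    intro m
    have : (algebraMap 𝕂 (MvPolynomial (Fin d) (MvPolynomial (Fin n × Fin d) 𝕂)) r)
        = C (C r) := rfl
    rw [this, coeff_C]
    split <;> [exact Subalgebra.algebraMap_mem _ _; exact zero_mem _]
  | add x y hx hy ihx ihy =>
    intro m
    rw [coeff_add]
    exact add_mem (ihx m) (ihy m)
  | mul x y hx hy ihx ihy =>
    intro m
    rw [coeff_mul]
    exact Subalgebra.sum_mem _ fun p _ => mul_mem (ihx p.1) (ihy p.2)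

lemma coeff_uu_pow (i : Fin n) (k : Fin d → ℕ) :
    coeff (Finsupp.equivFunOnFinite.symm k)
        ((uu i : MvPolynomial (Fin d) (MvPolynomial (Fin n × Fin d) 𝕂)) ^ (∑ j, k j))
      = (Nat.multinomial Finset.univ k : MvPolynomial (Fin n × Fin d) 𝕂) * xpow i k := by
  rw [uu, Finset.sum_pow_eq_sum_piAntidiag]
  have hterm' : ∀ w : Fin d → ℕ,
      ((Nat.multinomial Finset.univ w :
          MvPolynomial (Fin d) (MvPolynomial (Fin n × Fin d) 𝕂))
        * ∏ j, (X j * C (X (i, j))) ^ w j)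
      = monomial (Finsupp.equivFunOnFinite.symm w)
          ((Nat.multinomial Finset.univ w : MvPolynomial (Fin n × Fin d) 𝕂) * xpow i w) := by
    intro w
    have hfac : ∀ j : Fin d,
        ((X j * C (X (i, j)) : MvPolynomial (Fin d) (MvPolynomial (Fin n × Fin d) 𝕂)) ^ w j)
        = monomial (Finsupp.single j (w j)) ((X (i, j) : MvPolynomial (Fin n × Fin d) 𝕂) ^ w j) := by
      intro j
      rw [mul_pow, ← C_pow, mul_comm, C_mul_X_pow_eq_monomial]
    rw [Finset.prod_congr rfl fun j _ => hfac j, prod_monomial]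
    have hsing : (∑ j, Finsupp.single j (w j)) = Finsupp.equivFunOnFinite.symm w := by
      ext j'
      rw [Finsupp.finset_sum_apply]
      have : ∀ j : Fin d, Finsupp.single j (w j) j' = if j = j' then w j else 0 := by
        intro j; rw [Finsupp.single_apply]
      rw [Finset.sum_congr rfl fun j _ => this j, Finset.sum_ite_eq' Finset.univ j' w]
      simp
    rw [hsing, show (Nat.multinomial Finset.univ w :
        MvPolynomial (Fin d) (MvPolynomial (Fin n × Fin d) 𝕂))
      = C ((Nat.multinomial Finset.univ w : ℕ) : MvPolynomial (Fin n × Fin d) 𝕂)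
      from (map_natCast C _).symm, C_mul_monomial]
    rfl
  rw [Finset.sum_congr rfl fun w _ => hterm' w, coeff_sum]
  simp only [coeff_monomial]
  rw [Finset.sum_eq_single_of_mem k
    (by rw [Finset.mem_piAntidiag]; exact ⟨rfl, fun j _ => Finset.mem_univ j⟩)
    (fun w _ hne => by
      rw [if_neg]
      intro hc
      exact hne (Finsupp.equivFunOnFinite.symm.injective hc))]
  rw [if_pos rfl]

lemma Psum_mem (k : Fin d → ℕ) :
    (Psum k : MvPolynomial (Fin n × Fin d) 𝕂) ∈ Algebra.adjoin 𝕂 (genSet n d 𝕂) := by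
  have h1 : aeval (uu : Fin n → MvPolynomial (Fin d) (MvPolynomial (Fin n × Fin d) 𝕂))
      (MvPolynomial.psum (Fin n) 𝕂 (∑ j, k j))
      ∈ Algebra.adjoin 𝕂 (⇑(aeval (uu : Fin n → MvPolynomial (Fin d)
          (MvPolynomial (Fin n × Fin d) 𝕂))) '' Set.range (MvPolynomial.esymm (Fin n) 𝕂)) := by
    have h2 := psum_mem_adjoin (n := n) (𝕂 := 𝕂) (∑ j, k j)
    have h3 : (aeval (uu : Fin n → MvPolynomial (Fin d) (MvPolynomial (Fin n × Fin d) 𝕂)))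
        (MvPolynomial.psum (Fin n) 𝕂 (∑ j, k j))
        ∈ (Algebra.adjoin 𝕂 (Set.range (MvPolynomial.esymm (Fin n) 𝕂))).map
            (aeval (uu : Fin n → MvPolynomial (Fin d) (MvPolynomial (Fin n × Fin d) 𝕂))) :=
      Subalgebra.mem_map.mpr ⟨_, h2, rfl⟩
    rwa [AlgHom.map_adjoin] at h3
  have hS : ∀ p ∈ ⇑(aeval (uu : Fin n → MvPolynomial (Fin d)
      (MvPolynomial (Fin n × Fin d) 𝕂))) '' Set.range (MvPolynomial.esymm (Fin n) 𝕂),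
      ∀ m, coeff m p ∈ Algebra.adjoin 𝕂 (genSet n d 𝕂) := by
    rintro p ⟨q, ⟨r, rfl⟩, rfl⟩ m
    exact coeff_aeval_esymm_mem r m
  have h4 := coeff_mem_adjoin hS h1 (Finsupp.equivFunOnFinite.symm k)
  have h5 : coeff (Finsupp.equivFunOnFinite.symm k)
      ((aeval (uu : Fin n → MvPolynomial (Fin d) (MvPolynomial (Fin n × Fin d) 𝕂)))
        (MvPolynomial.psum (Fin n) 𝕂 (∑ j, k j)))
      = (Nat.multinomial Finset.univ k : MvPolynomial (Fin n × Fin d) 𝕂) * Psum k := by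
    rw [MvPolynomial.psum, map_sum, coeff_sum]
    have hi : ∀ i : Fin n, coeff (Finsupp.equivFunOnFinite.symm k)
        ((aeval (uu : Fin n → MvPolynomial (Fin d) (MvPolynomial (Fin n × Fin d) 𝕂)))
          ((X i : MvPolynomial (Fin n) 𝕂) ^ (∑ j, k j)))
        = (Nat.multinomial Finset.univ k : MvPolynomial (Fin n × Fin d) 𝕂) * xpow i k := by
      intro i
      rw [map_pow, aeval_X]
      exact coeff_uu_pow i k
    rw [Finset.sum_congr rfl fun i _ => hi i, Psum, Finset.mul_sum]
  rw [h5] at h4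
  have hN : ((Nat.multinomial Finset.univ k : ℕ) : 𝕂) ≠ 0 :=
    Nat.cast_ne_zero.mpr (Nat.multinomial_pos _ _).ne'
  have hfix : (Psum k : MvPolynomial (Fin n × Fin d) 𝕂)
      = C (((Nat.multinomial Finset.univ k : ℕ) : 𝕂)⁻¹)
        * ((Nat.multinomial Finset.univ k : MvPolynomial (Fin n × Fin d) 𝕂) * Psum k) := by
    rw [← mul_assoc, show (Nat.multinomial Finset.univ k : MvPolynomial (Fin n × Fin d) 𝕂)
        = C (((Nat.multinomial Finset.univ k : ℕ) : 𝕂)) from (map_natCast C _).symm,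
      ← C_mul, inv_mul_cancel₀ hN, C_1, one_mul]
  rw [hfix]
  refine mul_mem ?_ h4
  rw [← MvPolynomial.algebraMap_eq]
  exact Subalgebra.algebraMap_mem _ _

/-! ### Symmetrization: invariants lie in the adjoin of the power sums -/

lemma monomial_one_eq (m : Fin n × Fin d →₀ ℕ) :
    (monomial m 1 : MvPolynomial (Fin n × Fin d) 𝕂)
      = ∏ i, xpow i fun j => m (i, j) := by
  rw [monomial_eq, C_1, one_mul, Finsupp.prod_fintype _ _ (fun p => pow_zero _),
    Fintype.prod_prod_type]
  rfl

lemma rename_monomial_one (σ : Equiv.Perm (Fin n)) (m : Fin n × Fin d →₀ ℕ) :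
    rename (fun s : Fin n × Fin d => (σ s.1, s.2))
        (monomial m 1 : MvPolynomial (Fin n × Fin d) 𝕂)
      = ∏ i, xpow (σ i) fun j => m (i, j) := by
  rw [monomial_one_eq, map_prod]
  exact Finset.prod_congr rfl fun i _ => rename_xpow σ i _

lemma Jsum_mem : ∀ (N : ℕ) (a : Fin n → Fin d → ℕ),
    (Finset.univ.filter fun i => a i ≠ 0).card ≤ N →
    (Jsum a : MvPolynomial (Fin n × Fin d) 𝕂) ∈ Algebra.adjoin 𝕂 (genSet n d 𝕂) := by
  intro N
  induction N with
  | zero =>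
    intro a ha
    have h0 : ∀ i, a i = 0 := by
      intro i
      by_contra hne
      have hmem : i ∈ Finset.univ.filter fun i => a i ≠ 0 := by
        simp only [Finset.mem_filter, Finset.mem_univ, true_and]; exact hne
      have := Finset.card_pos.mpr ⟨i, hmem⟩
      omega
    have hJ : (Jsum a : MvPolynomial (Fin n × Fin d) 𝕂)
        = ((Nat.factorial n : ℕ) : MvPolynomial (Fin n × Fin d) 𝕂) := by
      rw [Jsum]
      have hone : ∀ σ : Equiv.Perm (Fin n),
          (∏ i, xpow (σ i) (a i) : MvPolynomial (Fin n × Fin d) 𝕂) = 1 := by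
        intro σ
        rw [Finset.prod_congr rfl fun i _ => by rw [h0 i, xpow_zero],
          Finset.prod_const_one]
      rw [Finset.sum_congr rfl fun σ _ => hone σ, Finset.sum_const, Finset.card_univ,
        Fintype.card_perm, Fintype.card_fin, nsmul_eq_mul, mul_one]
    rw [hJ]
    exact natCast_mem _ _
  | succ N ihN =>
    intro a ha
    rcases (Finset.univ.filter fun i => a i ≠ 0).eq_empty_or_nonempty with he | ⟨i0, hi0⟩
    · exact ihN a (by rw [he]; simp)
    have hai0 : a i0 ≠ 0 := by
      simpa only [Finset.mem_filter, Finset.mem_univ, true_and] using hi0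
    set a' : Fin n → Fin d → ℕ := Function.update a i0 0 with ha'
    set s' : Finset (Fin n) := Finset.univ.filter fun i => a' i ≠ 0 with hs'
    have hs'e : s' = (Finset.univ.filter fun i => a i ≠ 0).erase i0 := by
      ext i
      simp only [hs', Finset.mem_filter, Finset.mem_univ, true_and, Finset.mem_erase]
      rcases eq_or_ne i i0 with rfl | hne
      · simp [ha', Function.update_self]
      · simp [ha', Function.update_of_ne hne, hne]
    have hcard : s'.card ≤ N := by
      rw [hs'e, Finset.card_erase_of_mem hi0]
      omega
    have hi0s' : i0 ∉ s' := by rw [hs'e]; exact Finset.notMem_erase _ _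
    have ha'i0 : a' i0 = 0 := Function.update_self _ _ _
    have ha'eq : ∀ i, i ≠ i0 → a' i = a i := fun i hi => Function.update_of_ne hi _ _
    -- expansion of the product
    have expand : (Psum (a i0) * Jsum a' : MvPolynomial (Fin n × Fin d) 𝕂)
        = ∑ σ : Equiv.Perm (Fin n), ∑ u : Fin n,
            xpow (σ u) (a i0) * ∏ i, xpow (σ i) (a' i) := by
      rw [Psum, Jsum, Finset.sum_mul_sum]
      rw [Finset.sum_comm]
      refine Finset.sum_congr rfl fun σ _ => ?_
      exact (Equiv.sum_comp σ
        (fun t => xpow t (a i0) * ∏ i, xpow (σ i) (a' i))).symm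
    have inner1 : ∀ u ∈ s', ∀ σ : Equiv.Perm (Fin n),
        (xpow (σ u) (a i0) * ∏ i, xpow (σ i) (a' i) : MvPolynomial (Fin n × Fin d) 𝕂)
          = ∏ i, xpow (σ i) (Function.update a' u (a' u + a i0) i) := by
      intro u _ σ
      rw [← Finset.mul_prod_erase Finset.univ
          (fun i => xpow (σ i) (Function.update a' u (a' u + a i0) i)) (Finset.mem_univ u),
        Function.update_self, xpow_add,
        ← Finset.mul_prod_erase Finset.univ (fun i => xpow (σ i) (a' i)) (Finset.mem_univ u)]
      have hprod : (∏ i ∈ Finset.univ.erase u,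
            xpow (σ i) (Function.update a' u (a' u + a i0) i)
              : MvPolynomial (Fin n × Fin d) 𝕂)
          = ∏ i ∈ Finset.univ.erase u, xpow (σ i) (a' i) :=
        Finset.prod_congr rfl fun i hi => by
          rw [Function.update_of_ne (Finset.ne_of_mem_erase hi)]
      rw [hprod]
      ring
    have inner2 : ∀ u ∈ s'ᶜ,
        (∑ σ : Equiv.Perm (Fin n), xpow (σ u) (a i0) * ∏ i, xpow (σ i) (a' i)
          : MvPolynomial (Fin n × Fin d) 𝕂) = Jsum a := by
      intro u hu
      have hau : a' u = 0 := by
        have := Finset.mem_compl.mp hu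
        simp only [hs', Finset.mem_filter, Finset.mem_univ, true_and, not_not] at this
        exact this
      have ha'swap : ∀ i, a' (Equiv.swap i0 u i) = a' i := by
        intro i
        rcases eq_or_ne i i0 with rfl | h1
        · rw [Equiv.swap_apply_left, hau, ha'i0]
        rcases eq_or_ne i u with rfl | h2
        · rw [Equiv.swap_apply_right, hau, ha'i0]
        · rw [Equiv.swap_apply_of_ne_of_ne h1 h2]
      rw [Jsum]
      rw [← Equiv.sum_comp (Equiv.mulRight (Equiv.swap i0 u))
        (fun σ => xpow (σ u) (a i0) * ∏ i, xpow (σ i) (a' i))]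
      refine Finset.sum_congr rfl fun τ _ => ?_
      have h1 : (Equiv.mulRight (Equiv.swap i0 u) τ) u = τ i0 := by
        simp [Equiv.Perm.mul_apply]
      have h2 : (∏ i, xpow ((Equiv.mulRight (Equiv.swap i0 u) τ) i) (a' i)
          : MvPolynomial (Fin n × Fin d) 𝕂) = ∏ i, xpow (τ i) (a' i) := by
        have := Equiv.prod_comp (Equiv.swap i0 u)
          (fun i => (xpow (τ i) (a' (Equiv.swap i0 u i)) : MvPolynomial (Fin n × Fin d) 𝕂))
        calc (∏ i, xpow ((Equiv.mulRight (Equiv.swap i0 u) τ) i) (a' i)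
              : MvPolynomial (Fin n × Fin d) 𝕂)
            = ∏ i, xpow (τ (Equiv.swap i0 u i)) (a' (Equiv.swap i0 u (Equiv.swap i0 u i))) := by
              refine Finset.prod_congr rfl fun i _ => ?_
              rw [Equiv.swap_apply_self]
              rfl
          _ = ∏ i, xpow (τ i) (a' (Equiv.swap i0 u i)) := this
          _ = ∏ i, xpow (τ i) (a' i) := Finset.prod_congr rfl fun i _ => by rw [ha'swap i]
      rw [h1, h2]
      -- now: xpow (τ i0) (a i0) * ∏ xpow (τ i) (a' i) = ∏ xpow (τ i) (a i)
      rw [← Finset.mul_prod_erase Finset.univ (fun i => xpow (τ i) (a i)) (Finset.mem_univ i0),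
        ← Finset.mul_prod_erase Finset.univ (fun i => xpow (τ i) (a' i)) (Finset.mem_univ i0),
        ha'i0, xpow_zero, one_mul]
      exact congrArg (fun z => xpow (τ i0) (a i0) * z)
        (Finset.prod_congr rfl fun i hi => by rw [ha'eq i (Finset.ne_of_mem_erase hi)])
    -- the key identity
    have key : (Psum (a i0) * Jsum a' : MvPolynomial (Fin n × Fin d) 𝕂)
        = (∑ u ∈ s', Jsum (Function.update a' u (a' u + a i0))) + s'ᶜ.card • Jsum a := by
      rw [expand]
      have hsplit : ∀ σ : Equiv.Perm (Fin n),
          (∑ u : Fin n, xpow (σ u) (a i0) * ∏ i, xpow (σ i) (a' i)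
            : MvPolynomial (Fin n × Fin d) 𝕂)
          = (∑ u ∈ s', xpow (σ u) (a i0) * ∏ i, xpow (σ i) (a' i))
            + ∑ u ∈ s'ᶜ, xpow (σ u) (a i0) * ∏ i, xpow (σ i) (a' i) := by
        intro σ
        rw [Finset.sum_add_sum_compl]
      rw [Finset.sum_congr rfl fun σ _ => hsplit σ, Finset.sum_add_distrib]
      congr 1
      · rw [Finset.sum_comm]
        refine Finset.sum_congr rfl fun u hu => ?_
        rw [Finset.sum_congr rfl fun σ _ => inner1 u hu σ]
        rfl
      · rw [Finset.sum_comm]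
        rw [Finset.sum_congr rfl fun u hu => inner2 u hu, Finset.sum_const]
    -- solve for Jsum a
    have hclt : s'.card < n := by
      have hsub : s' ⊆ Finset.univ.erase i0 := by
        intro i hi
        exact Finset.mem_erase.mpr ⟨fun hc => hi0s' (hc ▸ hi), Finset.mem_univ i⟩
      have := Finset.card_le_card hsub
      rw [Finset.card_erase_of_mem (Finset.mem_univ i0), Finset.card_univ,
        Fintype.card_fin] at this
      have hnpos : 0 < n := i0.pos
      omega
    have hccard : s'ᶜ.card = n - s'.card := by
      rw [Finset.card_compl, Fintype.card_fin]
    have hc0 : ((s'ᶜ.card : ℕ) : 𝕂) ≠ 0 := by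
      rw [hccard]
      exact Nat.cast_ne_zero.mpr (by omega)
    have hJ : (Jsum a : MvPolynomial (Fin n × Fin d) 𝕂)
        = C (((s'ᶜ.card : ℕ) : 𝕂)⁻¹)
          * (Psum (a i0) * Jsum a'
              - ∑ u ∈ s', Jsum (Function.update a' u (a' u + a i0))) := by
      rw [key, add_sub_cancel_left, nsmul_eq_mul,
        show ((s'ᶜ.card : ℕ) : MvPolynomial (Fin n × Fin d) 𝕂)
          = C ((s'ᶜ.card : ℕ) : 𝕂) from (map_natCast C _).symm,
        ← mul_assoc, ← C_mul, inv_mul_cancel₀ hc0, C_1, one_mul]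
    rw [hJ]
    refine mul_mem ?_ (sub_mem (mul_mem (Psum_mem _) (ihN a' hcard))
      (Subalgebra.sum_mem _ fun u hu => ihN _ ?_))
    · rw [← MvPolynomial.algebraMap_eq]
      exact Subalgebra.algebraMap_mem _ _
    · -- the bumped function has support s'
      have hupds : (Finset.univ.filter fun i =>
          Function.update a' u (a' u + a i0) i ≠ 0) = s' := by
        ext i
        simp only [Finset.mem_filter, Finset.mem_univ, true_and, hs']
        rcases eq_or_ne i u with rfl | hne
        · rw [Function.update_self]
          have hu' : a' i ≠ 0 := by
            simpa only [hs', Finset.mem_filter, Finset.mem_univ, true_and] using hu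
          constructor
          · intro _; exact hu'
          · intro _ hc
            apply hu'
            funext j
            have := congrFun hc j
            simp only [Pi.add_apply, Pi.zero_apply] at this ⊢
            omega
        · rw [Function.update_of_ne hne]
      rw [hupds]
      exact hcard

end MultiSymAux

/-- the elementary multi-symmetric functions `e_k`, `k ∈ ℕ^d`,
`1 ≤ |k| ≤ n`, generate the invariant ring `R^{S_n}` as a `𝕂`-algebra. -/
theorem adjoin_elementary_multisymmetric_eq_invariants
    (n d : ℕ) (hn : 0 < n) (hd : 0 < d)
    (𝕂 : Type) [Field 𝕂] [CharZero 𝕂] :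
    Algebra.adjoin 𝕂
        {f : MvPolynomial (Fin n × Fin d) 𝕂 |
          ∃ k : Fin d → ℕ, 1 ≤ ∑ j, k j ∧ ∑ j, k j ≤ n ∧
            f = esym n d 𝕂 (fun j => X j) k}
      = symInvariants n d 𝕂 := by
  apply le_antisymm
  · rw [Algebra.adjoin_le_iff]
    rintro f ⟨k, -, -, rfl⟩
    intro σ
    exact MultiSymAux.rename_esym σ k
  · intro f hf
    replace hf : ∀ σ : Equiv.Perm (Fin n),
        rename (fun s : Fin n × Fin d => (σ s.1, s.2)) f = f := hf
    have hgen : {f : MvPolynomial (Fin n × Fin d) 𝕂 |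
          ∃ k : Fin d → ℕ, 1 ≤ ∑ j, k j ∧ ∑ j, k j ≤ n ∧
            f = esym n d 𝕂 (fun j => X j) k} = MultiSymAux.genSet n d 𝕂 := rfl
    rw [hgen]
    have hsum : (∑ σ : Equiv.Perm (Fin n),
          rename (fun s : Fin n × Fin d => (σ s.1, s.2)) f)
        = (Nat.factorial n : ℕ) • f := by
      rw [Finset.sum_congr rfl fun σ _ => hf σ, Finset.sum_const, Finset.card_univ,
        Fintype.card_perm, Fintype.card_fin]
    have hmono : ∀ (m : Fin n × Fin d →₀ ℕ) (σ : Equiv.Perm (Fin n)),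
        rename (fun s : Fin n × Fin d => (σ s.1, s.2)) (monomial m (coeff m f))
          = C (coeff m f) * ∏ i, MultiSymAux.xpow (σ i) (fun j => m (i, j)) := by
      intro m σ
      rw [show (monomial m (coeff m f) : MvPolynomial (Fin n × Fin d) 𝕂)
          = C (coeff m f) * monomial m 1 from by rw [C_mul_monomial, mul_one],
        map_mul, rename_C, MultiSymAux.rename_monomial_one]
    have hrw : (∑ σ : Equiv.Perm (Fin n),
          rename (fun s : Fin n × Fin d => (σ s.1, s.2)) f)
        = ∑ m ∈ f.support, C (coeff m f) *
            ∑ σ : Equiv.Perm (Fin n), ∏ i, MultiSymAux.xpow (σ i) (fun j => m (i, j)) := by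
      conv_lhs => rw [f.as_sum]
      rw [Finset.sum_congr rfl fun σ _ => map_sum _ _ _, Finset.sum_comm]
      exact Finset.sum_congr rfl fun m _ => by
        rw [Finset.sum_congr rfl fun σ _ => hmono m σ, ← Finset.mul_sum]
    have hmem : (∑ σ : Equiv.Perm (Fin n),
          rename (fun s : Fin n × Fin d => (σ s.1, s.2)) f)
        ∈ Algebra.adjoin 𝕂 (MultiSymAux.genSet n d 𝕂) := by
      rw [hrw]
      refine Subalgebra.sum_mem _ fun m _ => mul_mem ?_
        (MultiSymAux.Jsum_mem _ (fun i j => m (i, j)) le_rfl)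
      rw [← MvPolynomial.algebraMap_eq]
      exact Subalgebra.algebraMap_mem _ _
    rw [hsum] at hmem
    have hfac : ((Nat.factorial n : ℕ) : 𝕂) ≠ 0 :=
      Nat.cast_ne_zero.mpr (Nat.factorial_ne_zero n)
    have h2 := Subalgebra.smul_mem _ hmem (((Nat.factorial n : ℕ) : 𝕂)⁻¹)
    rwa [← Nat.cast_smul_eq_nsmul 𝕂, smul_smul, inv_mul_cancel₀ hfac, one_smul] at h2
end
end

section
/- The power sum multi-symmetric functions generate the invariant ring: the 𝕂-subalgebra of R = 𝕂[x_{ij} : i ∈ [n], j ∈ [d]] generated by the polynomials e_1(m) = m(1) + m(2) + ⋯ + m(n), where m ranges over all nonconstant monic monomials in y_1,…,y_d of total degree at most n, equals the subalgebra R^{S_n} of polynomials invariant under the S_n-action x_{ij} ↦ x_{σ(i)j}. -/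
open MvPolynomial Finset

noncomputable section

namespace PowerSumAux

/-- cancel a nonzero natural scalar inside a subalgebra over a char-zero field -/
lemma smul_mem_cancel {𝕂 : Type} [Field 𝕂] [CharZero 𝕂] {B : Type*} [CommRing B] [Algebra 𝕂 B]
    {A : Subalgebra 𝕂 B} {m : ℕ} (hm : m ≠ 0) {x : B} (h : m • x ∈ A) : x ∈ A := by
  have hx : x = ((m : 𝕂)⁻¹) • ((m : 𝕂) • x) := by
    rw [smul_smul, inv_mul_cancel₀ (Nat.cast_ne_zero.2 hm), one_smul]
  rw [hx, Nat.cast_smul_eq_nsmul]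
  exact A.smul_mem h _

lemma cast_mul_mem_cancel {𝕂 : Type} [Field 𝕂] [CharZero 𝕂] {B : Type*} [CommRing B] [Algebra 𝕂 B]
    {A : Subalgebra 𝕂 B} {m : ℕ} (hm : m ≠ 0) {x : B} (h : (m : B) * x ∈ A) : x ∈ A := by
  refine smul_mem_cancel hm ?_
  rwa [← nsmul_eq_mul] at h

lemma esymm_zero_of_lt (N k : ℕ) (h : N < k) : esymm (Fin N) ℚ k = 0 := by
  rw [esymm]
  rw [show (Finset.univ : Finset (Fin N)).powersetCard k = ∅ from
    Finset.powersetCard_eq_empty.2 (by simpa using h)]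
  simp

/-- all power sums and elementary symmetric polynomials lie in the ℚ-algebra generated by
the power sums of degree between 1 and N -/
lemma psum_esymm_mem (N : ℕ) (k : ℕ) :
    psum (Fin N) ℚ k ∈ Algebra.adjoin ℚ {p | ∃ j, 1 ≤ j ∧ j ≤ N ∧ p = psum (Fin N) ℚ j} ∧
    esymm (Fin N) ℚ k ∈ Algebra.adjoin ℚ {p | ∃ j, 1 ≤ j ∧ j ≤ N ∧ p = psum (Fin N) ℚ j} := by
  set P := Algebra.adjoin ℚ {p | ∃ j, 1 ≤ j ∧ j ≤ N ∧ p = psum (Fin N) ℚ j} with hP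
  induction k using Nat.strong_induction_on with
  | _ k ih =>
    have hpsum : psum (Fin N) ℚ k ∈ P := by
      rcases Nat.eq_zero_or_pos k with hk0 | hkpos
      · subst hk0
        have : psum (Fin N) ℚ 0 = (N : MvPolynomial (Fin N) ℚ) := by
          simp [psum]
        rw [this]; exact P.natCast_mem N
      rcases le_or_gt k N with hkN | hkN
      · exact Algebra.subset_adjoin ⟨k, hkpos, hkN, rfl⟩
      · rw [psum_eq_mul_esymm_sub_sum (Fin N) ℚ k hkpos,
          esymm_zero_of_lt N k (by simpa using hkN)]
        refine P.sub_mem (by simpa using P.zero_mem) ?_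
        refine P.sum_mem fun a ha => ?_
        simp only [mem_filter, HasAntidiagonal.mem_antidiagonal, Set.mem_Ioo] at ha
        refine P.mul_mem (P.mul_mem ?_ (ih a.1 (by omega)).2) (ih a.2 (by omega)).1
        exact P.pow_mem (P.neg_mem P.one_mem) _
    refine ⟨hpsum, ?_⟩
    rcases Nat.eq_zero_or_pos k with hk0 | hkpos
    · subst hk0; simpa [esymm] using P.one_mem
    have hk' : ((k : ℚ)) ≠ 0 := Nat.cast_ne_zero.2 hkpos.ne'
    have hmul := mul_esymm_eq_sum (Fin N) ℚ k
    have hz : (k : MvPolynomial (Fin N) ℚ) * esymm (Fin N) ℚ k ∈ P := by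
      rw [hmul]
      refine P.mul_mem (P.pow_mem (P.neg_mem P.one_mem) _) ?_
      refine P.sum_mem fun a ha => ?_
      simp only [mem_filter, HasAntidiagonal.mem_antidiagonal] at ha
      refine P.mul_mem (P.mul_mem (P.pow_mem (P.neg_mem P.one_mem) _) (ih a.1 (by omega)).2) ?_
      rcases lt_or_eq_of_le (show a.2 ≤ k by omega) with h2 | h2
      · exact (ih a.2 h2).1
      · rw [h2]; exact hpsum
    have : (k : MvPolynomial (Fin N) ℚ) * esymm (Fin N) ℚ k = (k : ℚ) • esymm (Fin N) ℚ k := by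
      rw [← C_mul']; norm_cast
    rw [this] at hz
    have := P.smul_mem hz ((k : ℚ)⁻¹)
    rwa [smul_smul, inv_mul_cancel₀ hk', one_smul] at this

/-- abstract corollary: any power sum of elements is in the ℚ-algebra generated by the
power sums of exponent 1..N -/
lemma sum_pow_mem {B : Type*} [CommRing B] [Algebra ℚ B] (N : ℕ) (v : Fin N → B) (k : ℕ) :
    (∑ i, v i ^ k) ∈ Algebra.adjoin ℚ {b | ∃ j, 1 ≤ j ∧ j ≤ N ∧ b = ∑ i, v i ^ j} := by
  have haeval : ∀ m : ℕ, aeval v (psum (Fin N) ℚ m) = ∑ i, v i ^ m := by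
    intro m; rw [psum]; simp
  have h := (psum_esymm_mem N k).1
  have hmap : aeval v (psum (Fin N) ℚ k) ∈
      (Algebra.adjoin ℚ {p | ∃ j, 1 ≤ j ∧ j ≤ N ∧ p = psum (Fin N) ℚ j}).map (aeval v) :=
    Subalgebra.mem_map.2 ⟨_, h, rfl⟩
  rw [AlgHom.map_adjoin] at hmap
  have hle : Algebra.adjoin ℚ
      ((aeval v) '' {p | ∃ j, 1 ≤ j ∧ j ≤ N ∧ p = psum (Fin N) ℚ j}) ≤
      Algebra.adjoin ℚ {b | ∃ j, 1 ≤ j ∧ j ≤ N ∧ b = ∑ i, v i ^ j} := by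
    refine Algebra.adjoin_mono ?_
    rintro p ⟨q, ⟨j, hj1, hjN, rfl⟩, rfl⟩
    exact ⟨j, hj1, hjN, haeval j⟩
  rw [haeval k] at hmap
  exact hle hmap

set_option linter.unusedSectionVars false

variable {n d : ℕ} (𝕂 : Type) [Field 𝕂] [CharZero 𝕂]

/-- the monomial `m(i)` -/
def mAt (i : Fin n) (e : Fin d →₀ ℕ) : MvPolynomial (Fin n × Fin d) 𝕂 :=
  substAt n d 𝕂 i (monomial e 1)

/-- the power sum `e₁(m)` -/
def pS (n : ℕ) {d : ℕ} (𝕂 : Type) [Field 𝕂] [CharZero 𝕂] (e : Fin d →₀ ℕ) :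
    MvPolynomial (Fin n × Fin d) 𝕂 :=
  ∑ i : Fin n, substAt n d 𝕂 i (monomial e 1)

lemma mAt_zero (i : Fin n) : mAt 𝕂 i (0 : Fin d →₀ ℕ) = 1 := by
  simp [mAt, substAt]

lemma mAt_add (i : Fin n) (e e' : Fin d →₀ ℕ) :
    mAt 𝕂 i (e + e') = mAt 𝕂 i e * mAt 𝕂 i e' := by
  simp [mAt, substAt, ← map_mul, monomial_mul]

lemma monomial_one_eq_prod {R : Type*} [CommSemiring R] (e : Fin d →₀ ℕ) :
    (monomial e (1 : R)) = ∏ j, (X j : MvPolynomial (Fin d) R) ^ e j := by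
  rw [monomial_eq, C_1, one_mul, Finsupp.prod_fintype]
  intro j; exact pow_zero _

lemma mAt_eq_prod (i : Fin n) (e : Fin d →₀ ℕ) :
    mAt 𝕂 i e = ∏ j, (X (i, j) : MvPolynomial (Fin n × Fin d) 𝕂) ^ e j := by
  rw [mAt, substAt, monomial_one_eq_prod, map_prod]
  simp

/-- the coefficient of `c^e` in `∑ i, (∑ j, x_{ij} c_j)^k` -/
lemma coeff_sum_vpow (k : ℕ) (e : Fin d →₀ ℕ) :
    coeff e (∑ i : Fin n, (∑ j : Fin d,
        (C (X (i, j)) * X j : MvPolynomial (Fin d) (MvPolynomial (Fin n × Fin d) 𝕂))) ^ k) =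
      if (∑ j, e j) = k then
        ((Nat.multinomial univ ⇑e : MvPolynomial (Fin n × Fin d) 𝕂)) * pS n 𝕂 e
      else 0 := by
  classical
  have hterm : ∀ (i : Fin n) (g : Fin d → ℕ),
      (∏ j, (C (X (i, j)) * X j :
          MvPolynomial (Fin d) (MvPolynomial (Fin n × Fin d) 𝕂)) ^ g j) =
        C (mAt 𝕂 i (Finsupp.equivFunOnFinite.symm g)) *
          monomial (Finsupp.equivFunOnFinite.symm g) 1 := by
    intro i g
    rw [mAt_eq_prod, monomial_one_eq_prod, map_prod]
    rw [← Finset.prod_mul_distrib]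
    refine Finset.prod_congr rfl fun j _ => ?_
    rw [mul_pow, map_pow]
    rfl
  simp_rw [Finset.sum_pow_eq_sum_piAntidiag, coeff_sum, hterm]
  have hcoe : ∀ (i : Fin n) (g : Fin d → ℕ),
      coeff e ((Nat.multinomial univ g :
          MvPolynomial (Fin d) (MvPolynomial (Fin n × Fin d) 𝕂)) *
        (C (mAt 𝕂 i (Finsupp.equivFunOnFinite.symm g)) *
          monomial (Finsupp.equivFunOnFinite.symm g) 1)) =
      if g = ⇑e then (Nat.multinomial univ g : MvPolynomial (Fin n × Fin d) 𝕂) * mAt 𝕂 i e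
      else 0 := by
    intro i g
    rw [← map_natCast (C : MvPolynomial (Fin n × Fin d) 𝕂 →+* _) (Nat.multinomial univ g),
      ← mul_assoc, ← C_mul, coeff_C_mul, coeff_monomial]
    have : (Finsupp.equivFunOnFinite.symm g = e) ↔ (g = ⇑e) := by
      constructor
      · intro h; rw [← h]; rfl
      · intro h; rw [h]; exact Finsupp.equivFunOnFinite_symm_coe e
    by_cases hg : g = ⇑e
    · rw [if_pos (this.2 hg), if_pos hg, mul_one, hg, Finsupp.equivFunOnFinite_symm_coe]
    · rw [if_neg (fun hh => hg (this.1 hh)), if_neg hg, mul_zero]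
  simp_rw [hcoe]
  have hsum : ∀ i : Fin n, (∑ g ∈ piAntidiag (univ : Finset (Fin d)) k,
      if g = ⇑e then (Nat.multinomial univ g : MvPolynomial (Fin n × Fin d) 𝕂) * mAt 𝕂 i e
      else 0) =
      if (∑ j, e j) = k then
        (Nat.multinomial univ ⇑e : MvPolynomial (Fin n × Fin d) 𝕂) * mAt 𝕂 i e
      else 0 := by
    intro i
    rw [Finset.sum_ite_eq' (piAntidiag (univ : Finset (Fin d)) k) (⇑e)]
    congr 1
    rw [eq_iff_iff]
    simp only [mem_piAntidiag]
    exact ⟨fun h => h.1, fun h1 => ⟨h1, fun j _ => mem_univ j⟩⟩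
  simp_rw [hsum]
  by_cases hk : (∑ j, e j) = k
  · simp only [if_pos hk, pS, ← Finset.mul_sum]; rfl
  · simp [if_neg hk]


/-- the generating set of the statement -/
def genSet (n d : ℕ) (𝕂 : Type) [Field 𝕂] [CharZero 𝕂] :
    Set (MvPolynomial (Fin n × Fin d) 𝕂) :=
  {f | ∃ e : Fin d →₀ ℕ, e ≠ 0 ∧ (∑ j, e j) ≤ n ∧
    f = ∑ i : Fin n, substAt n d 𝕂 i (monomial e 1)}

lemma sum_eq_pos {e : Fin d →₀ ℕ} (he : e ≠ 0) : 0 < ∑ j, e j := by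
  rcases Finsupp.ne_iff.1 he with ⟨j, hj⟩
  have : 0 < e j := Nat.pos_of_ne_zero (by simpa using hj)
  exact lt_of_lt_of_le this (Finset.single_le_sum (fun _ _ => Nat.zero_le _) (mem_univ j))

/-- STEP II : every power sum (of arbitrary degree) lies in the algebra generated by the
power sums of degree at most `n`. -/
lemma pS_mem (e : Fin d →₀ ℕ) (he : e ≠ 0) :
    pS n 𝕂 e ∈ Algebra.adjoin 𝕂 (genSet n d 𝕂) := by
  classical
  set A := Algebra.adjoin 𝕂 (genSet n d 𝕂) with hA
  set v : Fin n → MvPolynomial (Fin d) (MvPolynomial (Fin n × Fin d) 𝕂) :=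
    fun i => ∑ j : Fin d, (C (X (i, j)) * X j) with hv
  let M : Subalgebra 𝕂 (MvPolynomial (Fin d) (MvPolynomial (Fin n × Fin d) 𝕂)) :=
    { carrier := {p | ∀ e' : Fin d →₀ ℕ, coeff e' p ∈ A}
      mul_mem' := fun hp hq e' => by
        rw [coeff_mul]; exact A.sum_mem fun c _ => A.mul_mem (hp _) (hq _)
      add_mem' := fun hp hq e' => by rw [coeff_add]; exact A.add_mem (hp _) (hq _)
      algebraMap_mem' := fun r e' => by
        rw [MvPolynomial.algebraMap_apply, coeff_C]
        split
        · exact A.algebraMap_mem r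
        · exact A.zero_mem }
  have hgen : {b | ∃ j, 1 ≤ j ∧ j ≤ n ∧ b = ∑ i, v i ^ j} ⊆
      (M.restrictScalars ℚ : Set (MvPolynomial (Fin d) (MvPolynomial (Fin n × Fin d) 𝕂))) := by
    rintro b ⟨j, hj1, hjn, rfl⟩
    intro e'
    rw [hv]
    rw [coeff_sum_vpow 𝕂 j e']
    split
    · rename_i hsum
      refine A.mul_mem (A.natCast_mem _) (Algebra.subset_adjoin ?_)
      have he' : e' ≠ 0 := by
        intro h0; rw [h0] at hsum; simp at hsum; omega
      exact ⟨e', he', by omega, rfl⟩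
    · exact A.zero_mem
  have key := sum_pow_mem n v (∑ j, e j)
  have hmem : (∑ i, v i ^ (∑ j, e j)) ∈ M.restrictScalars ℚ :=
    Algebra.adjoin_le hgen key
  have hc : coeff e (∑ i, v i ^ (∑ j, e j)) ∈ A := hmem e
  rw [hv] at hc
  rw [coeff_sum_vpow 𝕂 (∑ j, e j) e, if_pos rfl] at hc
  exact cast_mul_mem_cancel (Nat.multinomial_pos _ _).ne' hc

lemma pS_eq_sum_mAt (e : Fin d →₀ ℕ) : pS n 𝕂 e = ∑ i : Fin n, mAt 𝕂 i e := rfl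

lemma rename_substAt (σ : Equiv.Perm (Fin n)) (i : Fin n) (q : MvPolynomial (Fin d) 𝕂) :
    rename (fun s : Fin n × Fin d => (σ s.1, s.2)) (substAt n d 𝕂 i q) =
      substAt n d 𝕂 (σ i) q := by
  rw [substAt, substAt, rename_rename]
  rfl

lemma rename_mAt (σ : Equiv.Perm (Fin n)) (i : Fin n) (e : Fin d →₀ ℕ) :
    rename (fun s : Fin n × Fin d => (σ s.1, s.2)) (mAt 𝕂 i e) = mAt 𝕂 (σ i) e :=
  rename_substAt 𝕂 σ i _

/-- the row extraction of a multi-exponent -/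
def rowOf (α : (Fin n × Fin d) →₀ ℕ) (i : Fin n) : Fin d →₀ ℕ :=
  Finsupp.equivFunOnFinite.symm (fun j => α (i, j))

lemma prod_monomial_one {ι : Type*} (s : Finset ι) (g : ι → ((Fin n × Fin d) →₀ ℕ)) :
    (∏ i ∈ s, monomial (g i) (1 : 𝕂)) = monomial (∑ i ∈ s, g i) 1 := by
  classical
  induction s using Finset.induction with
  | empty => rw [Finset.prod_empty, Finset.sum_empty]; rfl
  | insert _ _ h ih => rw [Finset.prod_insert h, Finset.sum_insert h, ih, monomial_mul, one_mul]

lemma monomial_eq_prod_mAt (α : (Fin n × Fin d) →₀ ℕ) :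
    monomial α (1 : 𝕂) = ∏ i, mAt 𝕂 i (rowOf α i) := by
  have h1 : ∀ i : Fin n, mAt 𝕂 i (rowOf α i) =
      monomial ((rowOf α i).mapDomain (fun j => (i, j))) (1 : 𝕂) := by
    intro i; rw [mAt, substAt, rename_monomial]
  have hαsum : (∑ i : Fin n, (rowOf α i).mapDomain (fun j => (i, j))) = α := by
    ext v
    obtain ⟨i, j⟩ := v
    rw [Finsupp.finset_sum_apply]
    rw [Finset.sum_eq_single i]
    · exact Finsupp.mapDomain_apply (fun a b hab => (Prod.ext_iff.1 hab).2) _ j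
    · intro i' _ hne
      apply Finsupp.mapDomain_notin_range
      rintro ⟨j', hj'⟩
      exact hne (Prod.ext_iff.1 hj').1
    · intro h; exact absurd (mem_univ i) h
  rw [Finset.prod_congr rfl fun i _ => h1 i, prod_monomial_one, hαsum]

/-- the full symmetrization of a product of row monomials -/
def Psym (β : Fin n → (Fin d →₀ ℕ)) : MvPolynomial (Fin n × Fin d) 𝕂 :=
  ∑ σ : Equiv.Perm (Fin n), ∏ i, mAt 𝕂 (σ i) (β i)

lemma Psym_comp (β : Fin n → (Fin d →₀ ℕ)) (τ : Equiv.Perm (Fin n)) :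
    Psym 𝕂 (β ∘ τ) = Psym 𝕂 β := by
  unfold Psym
  refine Fintype.sum_equiv (Equiv.mulRight τ⁻¹) _ _ fun σ => ?_
  show (∏ i, mAt 𝕂 (σ i) (β (τ i))) = ∏ i, mAt 𝕂 ((σ * τ⁻¹ : Equiv.Perm (Fin n)) i) (β i)
  rw [← Equiv.prod_comp τ (fun i => mAt 𝕂 ((σ * τ⁻¹ : Equiv.Perm (Fin n)) i) (β i))]
  refine Finset.prod_congr rfl fun i _ => ?_
  simp [Equiv.Perm.mul_apply]

/-- STEP III key induction: each symmetrized monomial lies in the adjoin. -/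
lemma Psym_mem : ∀ (k : ℕ) (β : Fin n → (Fin d →₀ ℕ)),
    (univ.filter fun i => β i ≠ 0).card = k →
    Psym 𝕂 β ∈ Algebra.adjoin 𝕂 (genSet n d 𝕂) := by
  intro k
  induction k with
  | zero =>
    intro β hβ
    have h0 : ∀ i, β i = 0 := by
      intro i
      by_contra h
      have hmem : i ∈ univ.filter fun i => β i ≠ 0 := by simp [h]
      rw [Finset.card_eq_zero.1 hβ] at hmem
      exact absurd hmem (Finset.notMem_empty i)
    unfold Psym
    refine Subalgebra.sum_mem _ fun σ _ => ?_
    have h1 : ∀ i : Fin n, mAt 𝕂 (σ i) (β i) = 1 := fun i => by rw [h0 i, mAt_zero]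
    rw [Finset.prod_congr rfl fun i _ => h1 i, Finset.prod_const_one]
    exact Subalgebra.one_mem _
  | succ k ih =>
    intro β hβ
    classical
    set A := Algebra.adjoin 𝕂 (genSet n d 𝕂) with hA
    set s := univ.filter (fun i => β i ≠ 0) with hs
    obtain ⟨i₀, hi₀⟩ : ∃ i₀, i₀ ∈ s := Finset.card_pos.1 (by rw [hβ]; omega)
    have hβi₀ : β i₀ ≠ 0 := (Finset.mem_filter.1 hi₀).2
    set β' := Function.update β i₀ 0 with hβ'
    set γ : Fin n → Fin n → (Fin d →₀ ℕ) :=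
      fun i₁ => Function.update β' i₁ (β' i₁ + β i₀) with hγ
    have hE2 : ∀ (σ : Equiv.Perm (Fin n)) (i₁ : Fin n),
        mAt 𝕂 (σ i₁) (β i₀) * ∏ i, mAt 𝕂 (σ i) (β' i) = ∏ i, mAt 𝕂 (σ i) (γ i₁ i) := by
      intro σ i₁
      have hupd : ∀ i : Fin n, mAt 𝕂 (σ i) (γ i₁ i) =
          Function.update (fun i => mAt 𝕂 (σ i) (β' i)) i₁
            (mAt 𝕂 (σ i₁) (β' i₁ + β i₀)) i := by
        intro i
        rcases eq_or_ne i i₁ with rfl | hne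
        · simp only [hγ, Function.update_self]
        · simp only [hγ, Function.update_of_ne hne]
      rw [Finset.prod_congr rfl fun i _ => hupd i, Finset.prod_update_of_mem (mem_univ i₁),
        mAt_add, Finset.prod_eq_mul_prod_sdiff_singleton_of_mem (mem_univ i₁)
          (fun i => mAt 𝕂 (σ i) (β' i))]
      ring
    have hE1 : pS n 𝕂 (β i₀) * Psym 𝕂 β' = ∑ i₁ : Fin n, Psym 𝕂 (γ i₁) := by
      unfold Psym
      rw [pS_eq_sum_mAt, Finset.sum_mul_sum, Finset.sum_comm]
      conv_rhs => rw [Finset.sum_comm]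
      refine Finset.sum_congr rfl fun σ _ => ?_
      rw [← Equiv.sum_comp σ (fun r => mAt 𝕂 r (β i₀) * ∏ i, mAt 𝕂 (σ i) (β' i))]
      exact Finset.sum_congr rfl fun i₁ _ => hE2 σ i₁
    have hγi₀ : γ i₀ = β := by
      funext i
      rcases eq_or_ne i i₀ with rfl | h
      · simp only [hγ, Function.update_self, hβ', zero_add]
      · simp only [hγ, Function.update_of_ne h, hβ', Function.update_of_ne h]
    have hswap : ∀ i₁, i₁ ∉ s → Psym 𝕂 (γ i₁) = Psym 𝕂 β := by
      intro i₁ h1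
      have hβi₁ : β i₁ = 0 := by
        by_contra h; exact h1 (Finset.mem_filter.2 ⟨mem_univ _, h⟩)
      have hne : i₁ ≠ i₀ := fun h => (h ▸ h1) hi₀
      have hγswap : γ i₁ = β ∘ (Equiv.swap i₀ i₁) := by
        funext i
        rcases eq_or_ne i i₁ with rfl | h1'
        · simp only [hγ, Function.update_self, Function.comp_apply, Equiv.swap_apply_right]
          rw [hβ', Function.update_of_ne hne, hβi₁, zero_add]
        · rcases eq_or_ne i i₀ with rfl | h2'
          · simp only [hγ, Function.update_of_ne (Ne.symm hne), Function.comp_apply,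
              Equiv.swap_apply_left]
            rw [hβ', Function.update_self, hβi₁]
          · simp only [hγ, Function.update_of_ne h1', Function.comp_apply,
              Equiv.swap_apply_of_ne_of_ne h2' h1']
            rw [hβ', Function.update_of_ne h2']
      rw [hγswap, Psym_comp]
    have hsum_split : ∑ i₁ : Fin n, Psym 𝕂 (γ i₁) =
        (n - (k+1)) • Psym 𝕂 β + (Psym 𝕂 β + ∑ i₁ ∈ s.erase i₀, Psym 𝕂 (γ i₁)) := by
      rw [← Finset.sum_sdiff (Finset.subset_univ s)]
      congr 1
      · rw [Finset.sum_congr rfl (fun i₁ hi₁ => hswap i₁ (Finset.mem_sdiff.1 hi₁).2),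
          Finset.sum_const]
        congr 1
        rw [Finset.card_sdiff_of_subset (Finset.subset_univ s), Finset.card_univ, Fintype.card_fin, hβ]
      · rw [← Finset.add_sum_erase s _ hi₀, hγi₀]
    have hfilter' : (univ.filter fun i => β' i ≠ 0) = s.erase i₀ := by
      ext i
      rcases eq_or_ne i i₀ with rfl | h
      · simp [hβ']
      · simp [hβ', Function.update_of_ne h, h, hs]
    have hfilterγ : ∀ i₁ ∈ s.erase i₀, (univ.filter fun i => γ i₁ i ≠ 0) = s.erase i₀ := by
      intro i₁ h1
      have hne : i₁ ≠ i₀ := (Finset.mem_erase.1 h1).1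
      have hne0 : β' i₁ + β i₀ ≠ 0 := by
        intro hh
        apply hβi₀
        ext j
        have hj := DFunLike.congr_fun hh j
        simp only [Finsupp.add_apply, Finsupp.coe_zero, Pi.zero_apply] at hj ⊢
        omega
      ext i
      rcases eq_or_ne i i₁ with rfl | h1'
      · simp only [Finset.mem_filter, mem_univ, true_and, hγ, Function.update_self]
        simp [hne0, h1]
      · simp only [Finset.mem_filter, mem_univ, true_and, hγ, Function.update_of_ne h1']
        rcases eq_or_ne i i₀ with rfl | h2'
        · simp [hβ']
        · simp [hβ', Function.update_of_ne h2', h2', hs]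
    have hcard_er : (s.erase i₀).card = k := by
      rw [Finset.card_erase_of_mem hi₀, hβ]; omega
    have hPβ' : Psym 𝕂 β' ∈ A := ih β' (by rw [hfilter', hcard_er])
    have hPγ : ∀ i₁ ∈ s.erase i₀, Psym 𝕂 (γ i₁) ∈ A :=
      fun i₁ h1 => ih _ (by rw [hfilterγ i₁ h1, hcard_er])
    have hkey : (n - (k+1) + 1) • Psym 𝕂 β =
        pS n 𝕂 (β i₀) * Psym 𝕂 β' - ∑ i₁ ∈ s.erase i₀, Psym 𝕂 (γ i₁) := by
      rw [hE1, hsum_split, succ_nsmul]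
      abel
    refine smul_mem_cancel (𝕂 := 𝕂) (m := n - (k+1) + 1) (by omega) ?_
    rw [hkey]
    exact A.sub_mem (A.mul_mem (pS_mem 𝕂 _ hβi₀) hPβ')
      (A.sum_mem fun i₁ h1 => hPγ i₁ h1)

/-- STEP I+III : the invariant ring is contained in the adjoin. -/
lemma invariants_le : symInvariants n d 𝕂 ≤ Algebra.adjoin 𝕂 (genSet n d 𝕂) := by
  intro f hf
  classical
  have hf' : ∀ σ : Equiv.Perm (Fin n),
      rename (fun s : Fin n × Fin d => (σ s.1, s.2)) f = f := hf
  set A := Algebra.adjoin 𝕂 (genSet n d 𝕂) with hA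
  refine smul_mem_cancel (𝕂 := 𝕂) (m := Fintype.card (Equiv.Perm (Fin n)))
    Fintype.card_ne_zero ?_
  have hcf : (Fintype.card (Equiv.Perm (Fin n))) • f
      = ∑ σ : Equiv.Perm (Fin n), rename (fun s : Fin n × Fin d => (σ s.1, s.2)) f := by
    rw [Finset.sum_congr rfl fun σ _ => hf' σ, Finset.sum_const, Finset.card_univ]
  have hren : ∀ σ : Equiv.Perm (Fin n),
      rename (fun s : Fin n × Fin d => (σ s.1, s.2)) f
        = ∑ α ∈ f.support, (coeff α f) • ∏ i, mAt 𝕂 (σ i) (rowOf α i) := by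
    intro σ
    conv_lhs => rw [← support_sum_monomial_coeff f]
    rw [map_sum]
    refine Finset.sum_congr rfl fun α _ => ?_
    have h1 : monomial α (coeff α f) = (coeff α f) • monomial α (1:𝕂) := by
      rw [smul_monomial, smul_eq_mul, mul_one]
    rw [h1, map_smul, monomial_eq_prod_mAt, map_prod]
    exact congrArg _ (Finset.prod_congr rfl fun i _ => rename_mAt 𝕂 σ i (rowOf α i))
  rw [hcf, Finset.sum_congr rfl fun σ _ => hren σ, Finset.sum_comm]
  refine A.sum_mem fun α _ => ?_
  rw [← Finset.smul_sum]
  exact A.smul_mem (Psym_mem 𝕂 _ (rowOf α) rfl) _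

end PowerSumAux

/-- the power sum multi-symmetric functions
`e_1(m) = m(1) + ⋯ + m(n)`, for `m` a nonconstant monic monomial in `y_1,…,y_d` of
total degree at most `n`, generate the invariant ring `R^{S_n}` as a `𝕂`-algebra. -/
theorem adjoin_power_sums_eq_invariants
    (n d : ℕ) (hn : 0 < n) (hd : 0 < d)
    (𝕂 : Type) [Field 𝕂] [CharZero 𝕂] :
    Algebra.adjoin 𝕂
        {f : MvPolynomial (Fin n × Fin d) 𝕂 |
          ∃ e : Fin d →₀ ℕ, e ≠ 0 ∧ (∑ j, e j) ≤ n ∧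
            f = ∑ i : Fin n, substAt n d 𝕂 i (monomial e (1 : 𝕂))}
      = symInvariants n d 𝕂 := by
  apply le_antisymm
  · apply Algebra.adjoin_le
    rintro f ⟨e, he, hle, rfl⟩
    intro σ
    rw [map_sum, Finset.sum_congr rfl fun i _ => PowerSumAux.rename_substAt 𝕂 σ i (monomial e 1)]
    exact Equiv.sum_comp σ (fun i => substAt n d 𝕂 i (monomial e 1))
  · exact PowerSumAux.invariants_le 𝕂
end
end

section
/- The normal-ordered Moyal star product is associative: for all f, g, h ∈ ℝ[ħ][x_1,…,x_n,y_1,…,y_n], (f ⋆ g) ⋆ h = f ⋆ (g ⋆ h). -/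
open MvPolynomial

noncomputable section

/-- `R_ħ = ℝ[ħ][x_1,…,x_n,y_1,…,y_n]`: variable `(i,0)` is `x_i`, variable `(i,1)` is
`y_i`, and the base ring is `ℝ[ħ] = Polynomial ℝ`. -/
abbrev Rh (n : ℕ) := MvPolynomial (Fin n × Fin 2) (Polynomial ℝ)

/-- The formal variable `ħ` as an element of `R_ħ`. -/
def hbar (n : ℕ) : Rh n := C Polynomial.X

/-- Iterated partial derivative `∂_{v_{i_1}} ⋯ ∂_{v_{i_k}}` (with `v = x` for `v = 0`
and `v = y` for `v = 1`). -/
def pderivIter {n : ℕ} (v : Fin 2) (l : List (Fin n)) (f : Rh n) : Rh n :=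
  l.foldr (fun i acc => pderiv (i, v) acc) f

/-- The normal-ordered Moyal star product
`f ⋆ g = Σ_{k ≥ 0} (ħ^k/k!) Σ_{(i_1,…,i_k) ∈ [n]^k}
  (∂_{y_{i_1}}⋯∂_{y_{i_k}} f) (∂_{x_{i_1}}⋯∂_{x_{i_k}} g)`. -/
def moyal {n : ℕ} (f g : Rh n) : Rh n :=
  ∑ᶠ k : ℕ, ((k.factorial : ℝ)⁻¹) •
    (hbar n ^ k * ∑ idx : Fin k → Fin n,
      pderivIter 1 (List.ofFn idx) f * pderivIter 0 (List.ofFn idx) g)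

namespace MoyalAux

/-- Partial derivatives commute. -/
lemma pderiv_pderiv_comm {σ R : Type*} [CommSemiring R] (i j : σ) (f : MvPolynomial σ R) :
    pderiv i (pderiv j f) = pderiv j (pderiv i f) := by
  induction f using MvPolynomial.induction_on with
  | C a => simp [pderiv_C]
  | add p q hp hq => simp [hp, hq]
  | mul_X p s ih =>
    classical
    have hx : ∀ t : σ, pderiv t (X s : MvPolynomial σ R) = C (if s = t then 1 else 0) := by
      intro t
      by_cases h : s = t
      · subst h; simp
      · simp [h]
    simp only [pderiv_mul, map_add, ih, hx, pderiv_C, mul_zero, add_zero]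
    ring

lemma sum_mem_support_pderiv {σ R : Type*} [CommSemiring R] (i : σ) (f : MvPolynomial σ R)
    {m : σ →₀ ℕ} (hm : m ∈ (pderiv i f).support) :
    m.sum (fun _ e => e) + 1 ≤ f.totalDegree := by
  classical
  have hrep : pderiv i f
      = ∑ v ∈ f.support, monomial (v - Finsupp.single i 1) (coeff v f * v i) := by
    conv_lhs => rw [f.as_sum]
    rw [map_sum]
    simp [pderiv_monomial]
  rw [hrep] at hm
  have := MvPolynomial.support_sum hm
  simp only [Finset.mem_biUnion] at this
  obtain ⟨v, hv, hmv⟩ := this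
  have hmv' := MvPolynomial.support_monomial_subset hmv
  simp only [Finset.mem_singleton] at hmv'
  subst hmv'
  have hne : coeff v f * ((v i : R)) ≠ 0 := by
    intro h0
    rw [h0] at hmv
    simp at hmv
  have hvi : v i ≠ 0 := by
    intro h0
    exact hne (by simp [h0])
  have hle : Finsupp.single i 1 ≤ v := by
    rw [Finsupp.single_le_iff]
    exact Nat.one_le_iff_ne_zero.mpr hvi
  have hv' : (v - Finsupp.single i 1) + Finsupp.single i 1 = v := tsub_add_cancel_of_le hle
  have hsum : (v - Finsupp.single i 1).sum (fun _ e => e) + 1 = v.sum (fun _ e => e) := by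
    conv_rhs => rw [← hv']
    rw [Finsupp.sum_add_index' (fun _ => rfl) (fun _ _ _ => rfl)]
    simp
  rw [hsum]
  exact le_totalDegree hv

lemma totalDegree_pderiv_le {σ R : Type*} [CommSemiring R] (i : σ) (f : MvPolynomial σ R) :
    (pderiv i f).totalDegree ≤ f.totalDegree := by
  by_cases h : pderiv i f = 0
  · simp [h]
  · obtain ⟨m, hm, hmax⟩ := Finset.exists_mem_eq_sup ((pderiv i f).support)
      (by simpa using h) (fun m => m.sum fun _ e => e)
    have h1 : (pderiv i f).totalDegree = m.sum (fun _ e => e) := hmax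
    have := sum_mem_support_pderiv i f hm
    omega

lemma totalDegree_pderiv_add_one_le {σ R : Type*} [CommSemiring R] (i : σ)
    (f : MvPolynomial σ R) (h : pderiv i f ≠ 0) :
    (pderiv i f).totalDegree + 1 ≤ f.totalDegree := by
  obtain ⟨m, hm, hmax⟩ := Finset.exists_mem_eq_sup ((pderiv i f).support)
    (by simpa using h) (fun m => m.sum fun _ e => e)
  have h1 : (pderiv i f).totalDegree = m.sum (fun _ e => e) := hmax
  rw [h1]
  exact sum_mem_support_pderiv i f hm

variable {n : ℕ}

lemma pderivIter_nil (v : Fin 2) (f : Rh n) : pderivIter v [] f = f := rfl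

lemma pderivIter_cons (v : Fin 2) (i : Fin n) (l : List (Fin n)) (f : Rh n) :
    pderivIter v (i :: l) f = pderiv (i, v) (pderivIter v l f) := rfl

lemma pderivIter_pderiv (v : Fin 2) (l : List (Fin n)) (s : Fin n × Fin 2) (f : Rh n) :
    pderivIter v l (pderiv s f) = pderiv s (pderivIter v l f) := by
  induction l with
  | nil => rfl
  | cons i l ih => rw [pderivIter_cons, pderivIter_cons, ih, pderiv_pderiv_comm]

/-- `T n k f g = Σ_{idx} ∂_y^idx f · ∂_x^idx g`. -/
def T (n k : ℕ) (f g : Rh n) : Rh n :=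
  ∑ idx : Fin k → Fin n, pderivIter 1 (List.ofFn idx) f * pderivIter 0 (List.ofFn idx) g

lemma moyal_def' (f g : Rh n) :
    moyal f g = ∑ᶠ k : ℕ, ((k.factorial : ℝ)⁻¹) • (hbar n ^ k * T n k f g) := rfl

lemma T_zero (f g : Rh n) : T n 0 f g = f * g := by
  rw [T, Fintype.sum_unique]
  simp [pderivIter_nil, List.ofFn_zero]

lemma T_succ (k : ℕ) (f g : Rh n) :
    T n (k+1) f g = ∑ i : Fin n, T n k (pderiv (i, 1) f) (pderiv (i, 0) g) := by
  rw [T, ← Equiv.sum_comp (Fin.consEquiv (fun _ => Fin n))]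
  rw [Fintype.sum_prod_type]
  refine Finset.sum_congr rfl fun i _ => ?_
  refine Finset.sum_congr rfl fun idx _ => ?_
  have hofn : List.ofFn (Fin.consEquiv (fun _ => Fin n) (i, idx)) = i :: List.ofFn idx := by
    rw [List.ofFn_succ]
    simp [Fin.consEquiv]
  rw [hofn, pderivIter_cons, pderivIter_cons, ← pderivIter_pderiv, ← pderivIter_pderiv]

lemma pderivIter_add (v : Fin 2) (l : List (Fin n)) (f g : Rh n) :
    pderivIter v l (f + g) = pderivIter v l f + pderivIter v l g := by
  induction l with
  | nil => rfl
  | cons i l ih => rw [pderivIter_cons, pderivIter_cons, pderivIter_cons, ih, map_add]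

lemma pderivIter_zero (v : Fin 2) (l : List (Fin n)) :
    pderivIter v l (0 : Rh n) = 0 := by
  induction l with
  | nil => rfl
  | cons i l ih => rw [pderivIter_cons, ih, map_zero]

lemma pderivIter_C_mul (v : Fin 2) (l : List (Fin n)) (a : Polynomial ℝ) (f : Rh n) :
    pderivIter v l (C a * f) = C a * pderivIter v l f := by
  induction l with
  | nil => rfl
  | cons i l ih => rw [pderivIter_cons, pderivIter_cons, ih, pderiv_C_mul]

lemma T_add_left (k : ℕ) (f f' g : Rh n) :
    T n k (f + f') g = T n k f g + T n k f' g := by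
  simp only [T, pderivIter_add, add_mul, Finset.sum_add_distrib]

lemma T_add_right (k : ℕ) (f g g' : Rh n) :
    T n k f (g + g') = T n k f g + T n k f g' := by
  simp only [T, pderivIter_add, mul_add, Finset.sum_add_distrib]

lemma T_zero_left (k : ℕ) (g : Rh n) : T n k 0 g = 0 := by
  simp [T, pderivIter_zero]

lemma T_zero_right (k : ℕ) (f : Rh n) : T n k f 0 = 0 := by
  simp [T, pderivIter_zero]

lemma T_C_mul_left (k : ℕ) (a : Polynomial ℝ) (f g : Rh n) :
    T n k (C a * f) g = C a * T n k f g := by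
  simp only [T, pderivIter_C_mul, Finset.mul_sum, mul_assoc]

lemma T_C_mul_right (k : ℕ) (a : Polynomial ℝ) (f g : Rh n) :
    T n k f (C a * g) = C a * T n k f g := by
  simp only [T, pderivIter_C_mul, Finset.mul_sum]
  refine Finset.sum_congr rfl fun idx _ => ?_
  ring

lemma T_Xx_left (k : ℕ) (i : Fin n) (f g : Rh n) :
    T n k (X (i, 0) * f) g = X (i, 0) * T n k f g := by
  induction k generalizing f g with
  | zero => rw [T_zero, T_zero, mul_assoc]
  | succ k ih =>
    rw [T_succ, T_succ, Finset.mul_sum]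
    refine Finset.sum_congr rfl fun j _ => ?_
    have hne : ((i, 0) : Fin n × Fin 2) ≠ (j, 1) := by simp
    rw [pderiv_mul, pderiv_X_of_ne hne, zero_mul, zero_add, ih]

lemma T_Xy_right (k : ℕ) (i : Fin n) (f g : Rh n) :
    T n k f (X (i, 1) * g) = X (i, 1) * T n k f g := by
  induction k generalizing f g with
  | zero =>
    rw [T_zero, T_zero]
    ring
  | succ k ih =>
    rw [T_succ, T_succ, Finset.mul_sum]
    refine Finset.sum_congr rfl fun j _ => ?_
    have hne : ((i, 1) : Fin n × Fin 2) ≠ (j, 0) := by simp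
    rw [pderiv_mul, pderiv_X_of_ne hne, zero_mul, zero_add, ih]

lemma pderiv_y_Xy_mul (i j : Fin n) (f : Rh n) :
    pderiv (j, 1) (X (i, 1) * f)
      = X (i, 1) * pderiv (j, 1) f + if i = j then f else 0 := by
  rw [pderiv_mul]
  by_cases h : i = j
  · subst h
    rw [pderiv_X_self]
    simp [add_comm]
  · have hne : ((i, 1) : Fin n × Fin 2) ≠ (j, 1) := by simp [h]
    rw [pderiv_X_of_ne hne]
    simp [h]

lemma pderiv_x_Xx_mul (i j : Fin n) (g : Rh n) :
    pderiv (j, 0) (X (i, 0) * g)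
      = X (i, 0) * pderiv (j, 0) g + if i = j then g else 0 := by
  rw [pderiv_mul]
  by_cases h : i = j
  · subst h
    rw [pderiv_X_self]
    simp [add_comm]
  · have hne : ((i, 0) : Fin n × Fin 2) ≠ (j, 0) := by simp [h]
    rw [pderiv_X_of_ne hne]
    simp [h]

lemma T_Xy_left (k : ℕ) (i : Fin n) (f g : Rh n) :
    T n (k+1) (X (i, 1) * f) g
      = X (i, 1) * T n (k+1) f g + (k+1) • T n k f (pderiv (i, 0) g) := by
  induction k generalizing f g with
  | zero =>
    simp only [zero_add, one_smul]
    rw [T_succ, T_succ]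
    simp only [pderiv_y_Xy_mul, T_add_left, T_zero]
    rw [Finset.sum_add_distrib, Finset.mul_sum]
    refine congrArg₂ (· + ·) ?_ ?_
    · refine Finset.sum_congr rfl fun j _ => by ring
    · calc (∑ j : Fin n, (if i = j then f else 0) * pderiv (j, 0) g)
          = ∑ j : Fin n, (if i = j then f * pderiv (j, 0) g else 0) := by
            refine Finset.sum_congr rfl fun j _ => by split <;> simp
        _ = f * pderiv (i, 0) g := by rw [Finset.sum_ite_eq]; simp
  | succ k ih =>
    rw [T_succ]
    have step : ∀ j : Fin n,
        T n (k+1) (pderiv (j,1) (X (i,1) * f)) (pderiv (j,0) g)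
          = X (i,1) * T n (k+1) (pderiv (j,1) f) (pderiv (j,0) g)
            + (k+1) • T n k (pderiv (j,1) f) (pderiv (i,0) (pderiv (j,0) g))
            + (if i = j then T n (k+1) f (pderiv (j,0) g) else 0) := by
      intro j
      rw [pderiv_y_Xy_mul, T_add_left, ih]
      congr 1
      split <;> simp [T_zero_left]
    rw [Finset.sum_congr rfl fun j _ => step j]
    rw [Finset.sum_add_distrib, Finset.sum_add_distrib]
    have h1 : (∑ j : Fin n, X (i,1) * T n (k+1) (pderiv (j,1) f) (pderiv (j,0) g))
        = X (i,1) * T n (k+1+1) f g := by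
      rw [T_succ (k+1) f g, Finset.mul_sum]
    have h2 : (∑ j : Fin n, (k+1) • T n k (pderiv (j,1) f) (pderiv (i,0) (pderiv (j,0) g)))
        = (k+1) • T n (k+1) f (pderiv (i,0) g) := by
      rw [T_succ k f (pderiv (i,0) g), Finset.smul_sum]
      refine Finset.sum_congr rfl fun j _ => ?_
      rw [pderiv_pderiv_comm]
    have h3 : (∑ j : Fin n, if i = j then T n (k+1) f (pderiv (j,0) g) else 0)
        = T n (k+1) f (pderiv (i,0) g) := by
      rw [Finset.sum_ite_eq]; simp
    rw [h1, h2, h3, succ_nsmul (T n (k+1) f (pderiv (i,0) g)) (k+1)]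
    abel

lemma T_Xx_right (k : ℕ) (i : Fin n) (f g : Rh n) :
    T n (k+1) f (X (i, 0) * g)
      = X (i, 0) * T n (k+1) f g + (k+1) • T n k (pderiv (i, 1) f) g := by
  induction k generalizing f g with
  | zero =>
    simp only [zero_add, one_smul]
    rw [T_succ, T_succ]
    simp only [pderiv_x_Xx_mul, T_add_right, T_zero]
    rw [Finset.sum_add_distrib]
    congr 1
    · rw [Finset.mul_sum]
      refine Finset.sum_congr rfl fun j _ => by ring
    · calc (∑ j : Fin n, pderiv (j, 1) f * (if i = j then g else 0))
          = ∑ j : Fin n, (if i = j then pderiv (j,1) f * g else 0) := by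
            refine Finset.sum_congr rfl fun j _ => by split <;> simp
        _ = pderiv (i, 1) f * g := by rw [Finset.sum_ite_eq]; simp
  | succ k ih =>
    rw [T_succ]
    have step : ∀ j : Fin n,
        T n (k+1) (pderiv (j,1) f) (pderiv (j,0) (X (i,0) * g))
          = X (i,0) * T n (k+1) (pderiv (j,1) f) (pderiv (j,0) g)
            + (k+1) • T n k (pderiv (i,1) (pderiv (j,1) f)) (pderiv (j,0) g)
            + (if i = j then T n (k+1) (pderiv (j,1) f) g else 0) := by
      intro j
      rw [pderiv_x_Xx_mul, T_add_right, ih]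
      congr 1
      split <;> simp [T_zero_right]
    rw [Finset.sum_congr rfl fun j _ => step j]
    rw [Finset.sum_add_distrib, Finset.sum_add_distrib]
    have h1 : (∑ j : Fin n, X (i,0) * T n (k+1) (pderiv (j,1) f) (pderiv (j,0) g))
        = X (i,0) * T n (k+1+1) f g := by
      rw [T_succ (k+1) f g, Finset.mul_sum]
    have h2 : (∑ j : Fin n, (k+1) • T n k (pderiv (i,1) (pderiv (j,1) f)) (pderiv (j,0) g))
        = (k+1) • T n (k+1) (pderiv (i,1) f) g := by
      rw [T_succ k (pderiv (i,1) f) g, Finset.smul_sum]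
      refine Finset.sum_congr rfl fun j _ => ?_
      rw [pderiv_pderiv_comm]
    have h3 : (∑ j : Fin n, if i = j then T n (k+1) (pderiv (j,1) f) g else 0)
        = T n (k+1) (pderiv (i,1) f) g := by
      rw [Finset.sum_ite_eq]; simp
    rw [h1, h2, h3, succ_nsmul (T n (k+1) (pderiv (i,1) f) g) (k+1)]
    abel

lemma T_pderiv_x (k : ℕ) (i : Fin n) (f g : Rh n) :
    pderiv (i, 0) (T n k f g)
      = T n k (pderiv (i, 0) f) g + T n k f (pderiv (i, 0) g) := by
  induction k generalizing f g with
  | zero => rw [T_zero, T_zero, T_zero, pderiv_mul]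
  | succ k ih =>
    rw [T_succ, map_sum]
    have step : ∀ j : Fin n,
        pderiv (i,0) (T n k (pderiv (j,1) f) (pderiv (j,0) g))
          = T n k (pderiv (j,1) (pderiv (i,0) f)) (pderiv (j,0) g)
            + T n k (pderiv (j,1) f) (pderiv (j,0) (pderiv (i,0) g)) := by
      intro j
      rw [ih, pderiv_pderiv_comm, pderiv_pderiv_comm (i,0) (j,0)]
    rw [Finset.sum_congr rfl fun j _ => step j, Finset.sum_add_distrib, T_succ, T_succ]

lemma T_eq_zero_left (k : ℕ) (f g : Rh n) (h : f.totalDegree < k) : T n k f g = 0 := by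
  induction k generalizing f g with
  | zero => omega
  | succ k ih =>
    rw [T_succ]
    refine Finset.sum_eq_zero fun j _ => ?_
    by_cases hz : pderiv (j, 1) f = 0
    · rw [hz, T_zero_left]
    · refine ih _ _ ?_
      have := totalDegree_pderiv_add_one_le (j, 1) f hz
      omega

lemma T_eq_zero_right (k : ℕ) (f g : Rh n) (h : g.totalDegree < k) : T n k f g = 0 := by
  induction k generalizing f g with
  | zero => omega
  | succ k ih =>
    rw [T_succ]
    refine Finset.sum_eq_zero fun j _ => ?_
    by_cases hz : pderiv (j, 0) g = 0
    · rw [hz, T_zero_right]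
    · refine ih _ _ ?_
      have := totalDegree_pderiv_add_one_le (j, 0) g hz
      omega

/-- The `k`-th term of the Moyal sum. -/
def S (n : ℕ) (f g : Rh n) (k : ℕ) : Rh n :=
  ((k.factorial : ℝ)⁻¹) • (hbar n ^ k * T n k f g)

lemma moyal_eq_S (f g : Rh n) : moyal f g = ∑ᶠ k : ℕ, S n f g k := rfl

lemma moyal_eq_sum_left (f g : Rh n) {m : ℕ} (h : f.totalDegree < m) :
    moyal f g = ∑ k ∈ Finset.range m, S n f g k := by
  rw [moyal_eq_S]
  refine finsum_eq_sum_of_support_subset _ fun k hk => ?_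
  simp only [Function.mem_support, Finset.coe_range, Set.mem_Iio] at hk ⊢
  by_contra hkm
  apply hk
  rw [S, T_eq_zero_left _ _ _ (by omega), mul_zero, smul_zero]

lemma moyal_eq_sum_right (f g : Rh n) {m : ℕ} (h : g.totalDegree < m) :
    moyal f g = ∑ k ∈ Finset.range m, S n f g k := by
  rw [moyal_eq_S]
  refine finsum_eq_sum_of_support_subset _ fun k hk => ?_
  simp only [Function.mem_support, Finset.coe_range, Set.mem_Iio] at hk ⊢
  by_contra hkm
  apply hk
  rw [S, T_eq_zero_right _ _ _ (by omega), mul_zero, smul_zero]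

lemma scalar_step (k : ℕ) (z : Rh n) :
    (((k+1).factorial : ℝ))⁻¹ • (hbar n ^ (k+1) * ((k+1) • z))
      = hbar n * (((k.factorial : ℝ))⁻¹ • (hbar n ^ k * z)) := by
  rw [mul_smul_comm, ← Nat.cast_smul_eq_nsmul ℝ, smul_smul, mul_smul_comm, ← mul_assoc,
    ← pow_succ']
  congr 1
  rw [Nat.factorial_succ]
  push_cast
  have h1 : (k.factorial : ℝ) ≠ 0 := Nat.cast_ne_zero.mpr k.factorial_ne_zero
  have h2 : ((k : ℝ) + 1) ≠ 0 := by positivity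
  field_simp

lemma S_add_left (k : ℕ) (f f' g : Rh n) :
    S n (f + f') g k = S n f g k + S n f' g k := by
  rw [S, S, S, T_add_left, mul_add, smul_add]

lemma S_add_right (k : ℕ) (f g g' : Rh n) :
    S n f (g + g') k = S n f g k + S n f g' k := by
  rw [S, S, S, T_add_right, mul_add, smul_add]

lemma S_C_mul_left (k : ℕ) (a : Polynomial ℝ) (f g : Rh n) :
    S n (C a * f) g k = C a * S n f g k := by
  rw [S, S, T_C_mul_left, mul_smul_comm]
  congr 1
  ring

lemma S_C_mul_right (k : ℕ) (a : Polynomial ℝ) (f g : Rh n) :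
    S n f (C a * g) k = C a * S n f g k := by
  rw [S, S, T_C_mul_right, mul_smul_comm]
  congr 1
  ring

lemma S_Xx_left (k : ℕ) (i : Fin n) (f g : Rh n) :
    S n (X (i,0) * f) g k = X (i,0) * S n f g k := by
  rw [S, S, T_Xx_left, mul_smul_comm]
  congr 1
  ring

lemma S_Xy_right (k : ℕ) (i : Fin n) (f g : Rh n) :
    S n f (X (i,1) * g) k = X (i,1) * S n f g k := by
  rw [S, S, T_Xy_right, mul_smul_comm]
  congr 1
  ring

lemma S_zero_y (i : Fin n) (f g : Rh n) :
    S n (X (i,1) * f) g 0 = X (i,1) * S n f g 0 := by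
  simp [S, T_zero, mul_assoc]

lemma S_zero_x (i : Fin n) (f g : Rh n) :
    S n f (X (i,0) * g) 0 = X (i,0) * S n f g 0 := by
  simp [S, T_zero]
  ring

lemma S_succ_y (k : ℕ) (i : Fin n) (f g : Rh n) :
    S n (X (i,1) * f) g (k+1)
      = X (i,1) * S n f g (k+1) + hbar n * S n f (pderiv (i,0) g) k := by
  rw [S, S, S, T_Xy_left, mul_add, smul_add, scalar_step]
  congr 1
  rw [mul_smul_comm]
  congr 1
  ring

lemma S_succ_x (k : ℕ) (i : Fin n) (f g : Rh n) :
    S n f (X (i,0) * g) (k+1)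
      = X (i,0) * S n f g (k+1) + hbar n * S n (pderiv (i,1) f) g k := by
  rw [S, S, S, T_Xx_right, mul_add, smul_add, scalar_step]
  congr 1
  rw [mul_smul_comm]
  congr 1
  ring

lemma pderiv_hbar_pow (s : Fin n × Fin 2) (k : ℕ) :
    pderiv s (hbar n ^ k) = 0 := by
  rw [hbar, ← map_pow, pderiv_C]

lemma real_smul_eq (r : ℝ) (p : Rh n) : r • p = C (Polynomial.C r) * p := by
  rw [Algebra.smul_def]
  rfl

lemma pderiv_real_smul (s : Fin n × Fin 2) (r : ℝ) (p : Rh n) :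
    pderiv s (r • p) = r • pderiv s p := by
  rw [real_smul_eq, pderiv_C_mul, real_smul_eq]

lemma S_pderiv_x (k : ℕ) (i : Fin n) (f g : Rh n) :
    pderiv (i,0) (S n f g k) = S n (pderiv (i,0) f) g k + S n f (pderiv (i,0) g) k := by
  rw [S, S, S, pderiv_real_smul, ← smul_add]
  congr 1
  rw [pderiv_mul, pderiv_hbar_pow, zero_mul, zero_add, T_pderiv_x, mul_add]

lemma moyal_add_left (f f' g : Rh n) :
    moyal (f + f') g = moyal f g + moyal f' g := by
  have h1 : f.totalDegree < max f.totalDegree f'.totalDegree + 1 := by omega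
  have h2 : f'.totalDegree < max f.totalDegree f'.totalDegree + 1 := by omega
  have h3 : (f + f').totalDegree < max f.totalDegree f'.totalDegree + 1 := by
    have := totalDegree_add f f'
    omega
  rw [moyal_eq_sum_left _ g h3, moyal_eq_sum_left _ g h1, moyal_eq_sum_left _ g h2,
    ← Finset.sum_add_distrib]
  exact Finset.sum_congr rfl fun k _ => S_add_left k f f' g

lemma moyal_add_right (f g g' : Rh n) :
    moyal f (g + g') = moyal f g + moyal f g' := by
  have h1 : g.totalDegree < max g.totalDegree g'.totalDegree + 1 := by omega
  have h2 : g'.totalDegree < max g.totalDegree g'.totalDegree + 1 := by omega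
  have h3 : (g + g').totalDegree < max g.totalDegree g'.totalDegree + 1 := by
    have := totalDegree_add g g'
    omega
  rw [moyal_eq_sum_right f _ h3, moyal_eq_sum_right f _ h1, moyal_eq_sum_right f _ h2,
    ← Finset.sum_add_distrib]
  exact Finset.sum_congr rfl fun k _ => S_add_right k f g g'

lemma moyal_C_mul_left (a : Polynomial ℝ) (f g : Rh n) :
    moyal (C a * f) g = C a * moyal f g := by
  have h1 : f.totalDegree < f.totalDegree + 1 := by omega
  have h2 : (C a * f).totalDegree < f.totalDegree + 1 := by
    have := totalDegree_mul (C a : Rh n) f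
    have : (C a : Rh n).totalDegree = 0 := totalDegree_C a
    omega
  rw [moyal_eq_sum_left _ g h2, moyal_eq_sum_left _ g h1, Finset.mul_sum]
  exact Finset.sum_congr rfl fun k _ => S_C_mul_left k a f g

lemma moyal_C_mul_right (a : Polynomial ℝ) (f g : Rh n) :
    moyal f (C a * g) = C a * moyal f g := by
  have h1 : g.totalDegree < g.totalDegree + 1 := by omega
  have h2 : (C a * g).totalDegree < g.totalDegree + 1 := by
    have := totalDegree_mul (C a : Rh n) g
    have : (C a : Rh n).totalDegree = 0 := totalDegree_C a
    omega
  rw [moyal_eq_sum_right f _ h2, moyal_eq_sum_right f _ h1, Finset.mul_sum]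
  exact Finset.sum_congr rfl fun k _ => S_C_mul_right k a f g

lemma moyal_C (a : Polynomial ℝ) (g : Rh n) : moyal (C a) g = C a * g := by
  rw [moyal_eq_sum_left (C a) g (m := 1) (by rw [totalDegree_C]; omega)]
  rw [Finset.sum_range_one]
  simp [S, T_zero]

lemma totalDegree_X_mul_lt (s : Fin n × Fin 2) (f : Rh n) (m : ℕ)
    (h : f.totalDegree < m) : (X s * f).totalDegree < m + 1 := by
  have h1 := totalDegree_mul (X s : Rh n) f
  have h2 : (X s : Rh n).totalDegree = 1 := totalDegree_X s
  omega

lemma moyal_Xx_left (i : Fin n) (f g : Rh n) :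
    moyal (X (i,0) * f) g = X (i,0) * moyal f g := by
  have hf : f.totalDegree < f.totalDegree + 1 + 1 := by omega
  have hXf := totalDegree_X_mul_lt ((i,0) : Fin n × Fin 2) f (f.totalDegree + 1)
    (by omega)
  rw [moyal_eq_sum_left _ g hXf, moyal_eq_sum_left _ g hf, Finset.mul_sum]
  exact Finset.sum_congr rfl fun k _ => S_Xx_left k i f g

lemma moyal_Xy_right (i : Fin n) (f g : Rh n) :
    moyal f (X (i,1) * g) = X (i,1) * moyal f g := by
  have hg : g.totalDegree < g.totalDegree + 1 + 1 := by omega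
  have hXg := totalDegree_X_mul_lt ((i,1) : Fin n × Fin 2) g (g.totalDegree + 1)
    (by omega)
  rw [moyal_eq_sum_right f _ hXg, moyal_eq_sum_right f _ hg, Finset.mul_sum]
  exact Finset.sum_congr rfl fun k _ => S_Xy_right k i f g

lemma moyal_Xy_left (i : Fin n) (f g : Rh n) :
    moyal (X (i,1) * f) g = X (i,1) * moyal f g + hbar n * moyal f (pderiv (i,0) g) := by
  set m := f.totalDegree + 1 with hm
  have hf : f.totalDegree < m := by omega
  have hf' : f.totalDegree < m + 1 := by omega
  have hXf := totalDegree_X_mul_lt ((i,1) : Fin n × Fin 2) f m hf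
  rw [moyal_eq_sum_left _ g hXf, moyal_eq_sum_left f g hf',
    moyal_eq_sum_left f (pderiv (i,0) g) hf]
  rw [Finset.sum_range_succ' _ m, Finset.sum_range_succ' (fun k => S n f g k) m]
  simp only [S_succ_y, S_zero_y, Finset.sum_add_distrib, Finset.mul_sum, mul_add]
  abel

lemma moyal_Xx_right (i : Fin n) (f g : Rh n) :
    moyal f (X (i,0) * g) = X (i,0) * moyal f g + hbar n * moyal (pderiv (i,1) f) g := by
  set m := g.totalDegree + 1 with hm
  have hg : g.totalDegree < m := by omega
  have hg' : g.totalDegree < m + 1 := by omega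
  have hXg := totalDegree_X_mul_lt ((i,0) : Fin n × Fin 2) g m hg
  rw [moyal_eq_sum_right f _ hXg, moyal_eq_sum_right f g hg',
    moyal_eq_sum_right (pderiv (i,1) f) g hg]
  rw [Finset.sum_range_succ' _ m, Finset.sum_range_succ' (fun k => S n f g k) m]
  simp only [S_succ_x, S_zero_x, Finset.sum_add_distrib, Finset.mul_sum, mul_add]
  abel

lemma moyal_pderiv_x (i : Fin n) (f g : Rh n) :
    pderiv (i,0) (moyal f g)
      = moyal (pderiv (i,0) f) g + moyal f (pderiv (i,0) g) := by
  have hf : f.totalDegree < f.totalDegree + 1 := by omega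
  have hdf : (pderiv ((i,0) : Fin n × Fin 2) f).totalDegree < f.totalDegree + 1 := by
    have := totalDegree_pderiv_le ((i,0) : Fin n × Fin 2) f
    omega
  rw [moyal_eq_sum_left f g hf, map_sum, moyal_eq_sum_left _ g hdf,
    moyal_eq_sum_left f (pderiv (i,0) g) hf, ← Finset.sum_add_distrib]
  exact Finset.sum_congr rfl fun k _ => S_pderiv_x k i f g

lemma moyal_hbar_mul_left (f g : Rh n) :
    moyal (hbar n * f) g = hbar n * moyal f g := by
  simp only [hbar]
  exact moyal_C_mul_left _ _ _

end MoyalAux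

open MoyalAux in
/-- the normal-ordered Moyal star product is associative. -/
theorem moyal_assoc (n : ℕ) (hn : 0 < n) (f g h : Rh n) :
    moyal (moyal f g) h = moyal f (moyal g h) := by
  clear hn
  induction f using MvPolynomial.induction_on generalizing g h with
  | C a => rw [moyal_C, moyal_C_mul_left, moyal_C]
  | add p q hp hq => rw [moyal_add_left, moyal_add_left, hp, hq, moyal_add_left]
  | mul_X p s ih =>
    obtain ⟨i, v⟩ := s
    rw [mul_comm p (X (i, v))]
    fin_cases v
    · show moyal (moyal (X (i,0) * p) g) h = moyal (X (i,0) * p) (moyal g h)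
      rw [moyal_Xx_left, moyal_Xx_left, ih, moyal_Xx_left]
    · show moyal (moyal (X (i,1) * p) g) h = moyal (X (i,1) * p) (moyal g h)
      rw [moyal_Xy_left i p g, moyal_add_left, moyal_Xy_left i (moyal p g) h,
        moyal_hbar_mul_left, moyal_Xy_left i p (moyal g h), moyal_pderiv_x,
        moyal_add_right, ih g h, ih (pderiv (i,0) g) h, ih g (pderiv (i,0) h)]
      ring
end
end
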